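/- arXiv:1902.00009 — 11 statements merged into one kernel-verified Lean document; each statement's English description precedes it below -/
import Mathlib

section
/- Every p×m matrix G over the field K = ℝ(λ) of real rational functions admits a descriptor realization: there exist a natural number n and real matrices A, E ∈ ℝ^{n×n}, B ∈ ℝ^{n×m}, C ∈ ℝ^{p×n}, D ∈ ℝ^{p×m} such that det(λ•E − A) ≠ 0 in K and G = C·(λ•E − A)⁻¹·B + D over K. -/
open Matrix

noncomputable section
set_option synthInstance.maxHeartbeats 1000000
set_option maxHeartbeats 1000000

/-- `K = ℝ(λ)`, the field of real rational functions. -/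
abbrev K : Type := RatFunc ℝ

/-- The rational function `λ` (the variable of `K`). -/
def Lam : K := RatFunc.X

/-- Entrywise embedding of a real matrix into matrices over `K = ℝ(λ)`. -/
def toK {ι κ : Type} (M : Matrix ι κ ℝ) : Matrix ι κ K := M.map (algebraMap ℝ K)

/-- General (type-indexed) realizability predicate. -/
def Rlz {pt mt : Type} (G : Matrix pt mt K) : Prop :=
  ∃ (ι : Type) (_ : Fintype ι) (_ : DecidableEq ι) (A E : Matrix ι ι ℝ)
    (B : Matrix ι mt ℝ) (C : Matrix pt ι ℝ) (D : Matrix pt mt ℝ),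
    (Lam • toK E - toK A).det ≠ 0 ∧
      G = toK C * (Lam • toK E - toK A)⁻¹ * toK B + toK D

lemma toK_mul {ι κ μ : Type} [Fintype κ] (M : Matrix ι κ ℝ) (N : Matrix κ μ ℝ) :
    toK (M * N) = toK M * toK N := Matrix.map_mul

lemma toK_zero {ι κ : Type} : toK (0 : Matrix ι κ ℝ) = 0 := by
  ext i j; simp [toK]

lemma toK_one {ι : Type} [Fintype ι] [DecidableEq ι] : toK (1 : Matrix ι ι ℝ) = 1 := by
  apply Matrix.map_one <;> simp

lemma toK_neg {ι κ : Type} (M : Matrix ι κ ℝ) : toK (-M) = -toK M := by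
  ext i j; simp [toK]

lemma toK_add {ι κ : Type} (M N : Matrix ι κ ℝ) : toK (M + N) = toK M + toK N := by
  ext i j; simp [toK]

lemma toK_fromBlocks {ι₁ ι₂ κ₁ κ₂ : Type} (A : Matrix ι₁ κ₁ ℝ) (B : Matrix ι₁ κ₂ ℝ)
    (C : Matrix ι₂ κ₁ ℝ) (D : Matrix ι₂ κ₂ ℝ) :
    toK (fromBlocks A B C D) = fromBlocks (toK A) (toK B) (toK C) (toK D) :=
  Matrix.fromBlocks_map _ _ _ _ _

lemma toK_fromRows {ι κ mt : Type} (B₁ : Matrix ι mt ℝ) (B₂ : Matrix κ mt ℝ) :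
    toK (fromRows B₁ B₂) = fromRows (toK B₁) (toK B₂) := by
  ext i j; cases i <;> rfl

lemma toK_fromColumns {ι κ pt : Type} (C₁ : Matrix pt ι ℝ) (C₂ : Matrix pt κ ℝ) :
    toK (fromCols C₁ C₂) = fromCols (toK C₁) (toK C₂) := by
  ext i j; cases j <;> rfl

/-- The pencil of a block(-diagonal E) structure splits into blocks. -/
lemma pencil_fromBlocks {ι κ : Type} (A₁ : Matrix ι ι ℝ) (X : Matrix ι κ ℝ) (Y : Matrix κ ι ℝ)
    (A₂ : Matrix κ κ ℝ) (E₁ : Matrix ι ι ℝ) (E₂ : Matrix κ κ ℝ) :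
    Lam • toK (fromBlocks E₁ 0 0 E₂) - toK (fromBlocks A₁ X Y A₂) =
      fromBlocks (Lam • toK E₁ - toK A₁) (-toK X) (-toK Y) (Lam • toK E₂ - toK A₂) := by
  rw [toK_fromBlocks, toK_fromBlocks, toK_zero, Matrix.fromBlocks_smul,
    sub_eq_add_neg, Matrix.fromBlocks_neg, Matrix.fromBlocks_add]
  simp [sub_eq_add_neg, toK_zero]

lemma rlz_const {pt mt : Type} (D : Matrix pt mt ℝ) : Rlz (toK D) := by
  refine ⟨PEmpty, inferInstance, inferInstance, 0, 0, 0, 0, D, by simp, ?_⟩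
  ext i j
  simp [Matrix.mul_apply]

lemma rlz_zero {pt mt : Type} : Rlz (0 : Matrix pt mt K) := by
  simpa [toK_zero] using rlz_const (0 : Matrix pt mt ℝ)

lemma rlz_add {pt mt : Type} {G₁ G₂ : Matrix pt mt K} (h₁ : Rlz G₁) (h₂ : Rlz G₂) :
    Rlz (G₁ + G₂) := by
  obtain ⟨ι₁, f₁, d₁, A₁, E₁, B₁, C₁, D₁, hd₁, hG₁⟩ := h₁
  obtain ⟨ι₂, f₂, d₂, A₂, E₂, B₂, C₂, D₂, hd₂, hG₂⟩ := h₂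
  letI := f₁; letI := d₁; letI := f₂; letI := d₂
  set M₁ := Lam • toK E₁ - toK A₁ with hM₁
  set M₂ := Lam • toK E₂ - toK A₂ with hM₂
  refine ⟨ι₁ ⊕ ι₂, inferInstance, inferInstance, fromBlocks A₁ 0 0 A₂, fromBlocks E₁ 0 0 E₂,
    fromRows B₁ B₂, fromCols C₁ C₂, D₁ + D₂, ?_, ?_⟩
  · rw [pencil_fromBlocks]
    simp only [toK_zero, neg_zero]
    rw [Matrix.det_fromBlocks_zero₂₁]
    exact mul_ne_zero hd₁ hd₂
  · rw [pencil_fromBlocks]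
    simp only [toK_zero, neg_zero]
    have hinv : (fromBlocks M₁ 0 0 M₂)⁻¹ = fromBlocks M₁⁻¹ 0 0 M₂⁻¹ := by
      rw [Matrix.inv_fromBlocks_zero₂₁_of_isUnit_iff]
      · simp
      · simp only [Matrix.isUnit_iff_isUnit_det, isUnit_iff_ne_zero]
        exact iff_of_true hd₁ hd₂
    rw [hinv, toK_fromRows, toK_fromColumns, Matrix.fromCols_mul_fromBlocks,
      Matrix.fromCols_mul_fromRows, hG₁, hG₂, toK_add]
    simp only [Matrix.mul_zero, Matrix.zero_mul, add_zero, zero_add]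
    abel

lemma rlz_sum {pt mt α : Type} [DecidableEq α] (s : Finset α) (f : α → Matrix pt mt K)
    (h : ∀ a ∈ s, Rlz (f a)) : Rlz (∑ a ∈ s, f a) := by
  induction s using Finset.induction_on with
  | empty => simpa using rlz_zero
  | insert a s hni ih =>
    rw [Finset.sum_insert hni]
    exact rlz_add (h _ (Finset.mem_insert_self _ _))
      (ih fun a ha => h a (Finset.mem_insert_of_mem ha))

lemma rlz_mul_left_right {pt mt pt' mt' : Type} [Fintype pt] [Fintype mt]
    {G : Matrix pt mt K} (h : Rlz G) (L : Matrix pt' pt ℝ) (R : Matrix mt mt' ℝ) :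
    Rlz (toK L * G * toK R) := by
  obtain ⟨ι, fι, dι, A, E, B, C, D, hd, hG⟩ := h
  letI := fι; letI := dι
  refine ⟨ι, inferInstance, inferInstance, A, E, B * R, L * C, L * D * R, hd, ?_⟩
  rw [hG, toK_mul, toK_mul, toK_mul, toK_mul]
  simp only [Matrix.mul_add, Matrix.add_mul, Matrix.mul_assoc]

/-- The 1×1 matrix (indexed by `Unit`) with entry `g`. -/
def sm (g : K) : Matrix Unit Unit K := Matrix.of fun _ _ => g

def SReal (g : K) : Prop := Rlz (sm g)

lemma sm_add (g h : K) : sm (g + h) = sm g + sm h := rfl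

lemma sm_mul (g h : K) : sm (g * h) = sm g * sm h := by
  ext i j; simp [sm, Matrix.mul_apply]

lemma sm_det (g : K) : (sm g).det = g := Matrix.det_unique _

lemma sm_inv (g : K) : (sm g)⁻¹ = sm g⁻¹ := by
  ext i j
  simp [sm, Matrix.inv_subsingleton, Ring.inverse_eq_inv', Matrix.diagonal]

lemma sreal_add {g h : K} (hg : SReal g) (hh : SReal h) : SReal (g + h) := by
  rw [SReal, sm_add]; exact rlz_add hg hh

lemma sreal_const (r : ℝ) : SReal (algebraMap ℝ K r) := by
  have h := rlz_const (Matrix.of fun (_ : Unit) (_ : Unit) => r)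
  exact h

lemma sreal_invLam : SReal Lam⁻¹ := by
  refine ⟨Unit, inferInstance, inferInstance, 0, 1, 1, 1, 0, ?_, ?_⟩
  · rw [toK_zero, toK_one, sub_zero]
    have : Lam • (1 : Matrix Unit Unit K) = sm Lam := by
      ext i j; simp [sm, Matrix.one_apply]
    rw [this, sm_det]
    exact RatFunc.X_ne_zero
  · rw [toK_zero, toK_one, sub_zero]
    have h1 : Lam • (1 : Matrix Unit Unit K) = sm Lam := by
      ext i j; simp [sm, Matrix.one_apply]
    rw [h1, sm_inv]
    ext i j
    simp [sm, Matrix.mul_apply, toK, Matrix.one_apply]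

lemma sreal_mul {g h : K} (hg : SReal g) (hh : SReal h) : SReal (g * h) := by
  obtain ⟨ι₁, f₁, d₁, A₁, E₁, B₁, C₁, D₁, hd₁, hG₁⟩ := hg
  obtain ⟨ι₂, f₂, d₂, A₂, E₂, B₂, C₂, D₂, hd₂, hG₂⟩ := hh
  letI := f₁; letI := d₁; letI := f₂; letI := d₂
  set M₁ := Lam • toK E₁ - toK A₁ with hM₁
  set M₂ := Lam • toK E₂ - toK A₂ with hM₂
  refine ⟨ι₁ ⊕ ι₂, inferInstance, inferInstance, fromBlocks A₁ (B₁ * C₂) 0 A₂,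
    fromBlocks E₁ 0 0 E₂, fromRows (B₁ * D₂) B₂, fromCols C₁ (D₁ * C₂), D₁ * D₂, ?_, ?_⟩
  · rw [pencil_fromBlocks]
    simp only [toK_zero, neg_zero]
    rw [Matrix.det_fromBlocks_zero₂₁]
    exact mul_ne_zero hd₁ hd₂
  · rw [pencil_fromBlocks]
    simp only [toK_zero, neg_zero]
    have hinv : (fromBlocks M₁ (-toK (B₁ * C₂)) 0 M₂)⁻¹ =
        fromBlocks M₁⁻¹ (M₁⁻¹ * toK B₁ * toK C₂ * M₂⁻¹) 0 M₂⁻¹ := by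
      rw [Matrix.inv_fromBlocks_zero₂₁_of_isUnit_iff]
      · rw [toK_mul]
        congr 1
        simp only [Matrix.mul_neg, Matrix.neg_mul, neg_neg, Matrix.mul_assoc]
      · simp only [Matrix.isUnit_iff_isUnit_det, isUnit_iff_ne_zero]
        exact iff_of_true hd₁ hd₂
    rw [hinv, toK_fromRows, toK_fromColumns, Matrix.fromCols_mul_fromBlocks,
      Matrix.fromCols_mul_fromRows, sm_mul, hG₁, hG₂, toK_mul, toK_mul, toK_mul]
    simp only [Matrix.mul_zero, Matrix.zero_mul, add_zero, zero_add, Matrix.mul_add,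
      Matrix.add_mul, Matrix.mul_assoc]
    abel

lemma sreal_inv {g : K} (hg0 : g ≠ 0) (hg : SReal g) : SReal g⁻¹ := by
  obtain ⟨ι, fι, dι, A, E, B, C, D, hd, hG⟩ := hg
  letI := fι; letI := dι
  set M := Lam • toK E - toK A with hM
  have hpen : ∀ (Z : Matrix Unit Unit ℝ),
      Lam • toK (fromBlocks E 0 0 (0 : Matrix Unit Unit ℝ)) - toK (fromBlocks A B (-C) (-Z)) =
      fromBlocks M (-toK B) (toK C) (toK Z) := by
    intro Z
    rw [pencil_fromBlocks, toK_neg, toK_neg, neg_neg, toK_zero, smul_zero, zero_sub, neg_neg]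
  haveI iM : Invertible M := M.invertibleOfIsUnitDet (isUnit_iff_ne_zero.2 hd)
  have hschur : toK D - toK C * ⅟M * (-toK B) = sm g := by
    rw [Matrix.invOf_eq_nonsing_inv, Matrix.mul_neg, sub_neg_eq_add, hG, add_comm]
  haveI iS : Invertible (toK D - toK C * ⅟M * (-toK B)) := by
    rw [hschur]
    exact (sm g).invertibleOfIsUnitDet (by rw [sm_det]; exact isUnit_iff_ne_zero.2 hg0)
  haveI iP : Invertible (fromBlocks M (-toK B) (toK C) (toK D)) :=
    Matrix.fromBlocks₁₁Invertible _ _ _ _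
  have key : ⅟(toK D - toK C * ⅟M * (-toK B)) = sm g⁻¹ := by
    rw [Matrix.invOf_eq_nonsing_inv, hschur, sm_inv]
  refine ⟨ι ⊕ Unit, inferInstance, inferInstance, fromBlocks A B (-C) (-D),
    fromBlocks E 0 0 0, fromRows 0 1, fromCols 0 1, 0, ?_, ?_⟩
  · rw [hpen D, Matrix.det_fromBlocks₁₁, hschur, sm_det]
    exact mul_ne_zero hd hg0
  · rw [hpen D, toK_fromColumns, toK_fromRows]
    simp only [toK_zero, toK_one]
    rw [← Matrix.invOf_eq_nonsing_inv, Matrix.invOf_fromBlocks₁₁_eq,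
      Matrix.fromCols_mul_fromBlocks, Matrix.fromCols_mul_fromRows, key]
    simp

lemma sreal_lam : SReal Lam := by
  have h := sreal_inv (g := Lam⁻¹) (inv_ne_zero RatFunc.X_ne_zero) sreal_invLam
  rwa [inv_inv] at h

lemma sreal_poly (q : Polynomial ℝ) : SReal (algebraMap (Polynomial ℝ) K q) := by
  induction q using Polynomial.induction_on with
  | C a => rw [RatFunc.algebraMap_C]; exact sreal_const a
  | add p q hp hq => rw [map_add]; exact sreal_add hp hq
  | monomial n a ih =>
    rw [pow_succ, ← mul_assoc, _root_.map_mul, RatFunc.algebraMap_X]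
    exact sreal_mul ih sreal_lam

lemma sreal_all (g : K) : SReal g := by
  rw [← RatFunc.num_div_denom g, div_eq_mul_inv]
  exact sreal_mul (sreal_poly _)
    (sreal_inv (RatFunc.algebraMap_ne_zero (RatFunc.denom_ne_zero g)) (sreal_poly _))

lemma rlz_entry {p m : ℕ} (i : Fin p) (j : Fin m) (g : K) :
    Rlz (Matrix.single i j g) := by
  have h := rlz_mul_left_right (sreal_all g)
    (Matrix.of fun i' (_ : Unit) => if i = i' then (1:ℝ) else 0)
    (Matrix.of fun (_ : Unit) j' => if j = j' then (1:ℝ) else 0)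
  have e : toK (Matrix.of fun i' (_ : Unit) => if i = i' then (1:ℝ) else 0) * sm g *
      toK (Matrix.of fun (_ : Unit) j' => if j = j' then (1:ℝ) else 0) =
      Matrix.single i j g := by
    ext i' j'
    simp only [toK, sm, Matrix.mul_apply, Matrix.single, Matrix.map_apply, Matrix.of_apply,
      Finset.univ_unique, Finset.sum_singleton, apply_ite (algebraMap ℝ K), _root_.map_one, _root_.map_zero]
    split_ifs <;> simp_all
  rwa [e] at h

lemma rlz_fin {p m : ℕ} (G : Matrix (Fin p) (Fin m) K) : Rlz G := by
  rw [Matrix.matrix_eq_sum_single G]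
  exact rlz_sum _ _ fun i _ => rlz_sum _ _ fun j _ => rlz_entry i j _

/-- every rational matrix admits a descriptor realization. -/
theorem exists_descriptor_realization {p m : ℕ} (G : Matrix (Fin p) (Fin m) K) :
    ∃ (n : ℕ) (A E : Matrix (Fin n) (Fin n) ℝ) (B : Matrix (Fin n) (Fin m) ℝ)
      (C : Matrix (Fin p) (Fin n) ℝ) (D : Matrix (Fin p) (Fin m) ℝ),
      (Lam • toK E - toK A).det ≠ 0 ∧
        G = toK C * (Lam • toK E - toK A)⁻¹ * toK B + toK D := by
  obtain ⟨ι, fι, dι, A, E, B, C, D, hd, hG⟩ := rlz_fin G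
  letI := fι; letI := dι
  set M := Lam • toK E - toK A with hM
  let e : Fin (Fintype.card ι) ≃ ι := (Fintype.equivFin ι).symm
  have hsub : ∀ (N : Matrix ι ι ℝ), toK (N.submatrix e e) = (toK N).submatrix e e :=
    fun N => (Matrix.submatrix_map _ _ _ _).symm
  have hp : Lam • toK (E.submatrix e e) - toK (A.submatrix e e) = M.submatrix e e := by
    ext i' j'
    simp [toK, hM, Lam]
  refine ⟨Fintype.card ι, A.submatrix e e, E.submatrix e e, B.submatrix e id,
    C.submatrix id e, D, ?_, ?_⟩
  · rw [hp, Matrix.det_submatrix_equiv_self]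
    exact hd
  · rw [hp]
    have hinv : (M.submatrix e e)⁻¹ = M⁻¹.submatrix e e := by
      apply Matrix.inv_eq_right_inv
      rw [Matrix.submatrix_mul_equiv, Matrix.mul_nonsing_inv _ (isUnit_iff_ne_zero.2 hd), Matrix.submatrix_one_equiv]
    have hB : toK (B.submatrix e id) = (toK B).submatrix (⇑e) id :=
      (Matrix.submatrix_map _ _ _ _).symm
    have hC : toK (C.submatrix id e) = (toK C).submatrix id (⇑e) :=
      (Matrix.submatrix_map _ _ _ _).symm
    rw [hinv, hB, hC, Matrix.submatrix_mul_equiv, Matrix.submatrix_mul_equiv,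
      Matrix.submatrix_id_id]
    exact hG
end
end

section
/- Let (A−λE, B, C, D) be a descriptor realization of order n of the p×m matrix G = C·(λ•E − A)⁻¹·B + D over K = ℝ(λ), and let S be the (n+p)×(n+m) block matrix over K given by S = [[A − λ•E, B], [C, D]]. Then the rank of S over the field K equals n plus the rank of G over K; equivalently, the normal rank r of G satisfies r = rank S − n. -/
open Matrix

noncomputable section
set_option synthInstance.maxHeartbeats 1000000
set_option maxHeartbeats 1000000

/-- Rank of a block-diagonal matrix whose top-left block is invertible. -/
lemma rank_fromBlocks_diag_aux {F : Type*} [Field F] {n m p : ℕ}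
    (M : Matrix (Fin n) (Fin n) F) (hM : IsUnit M.det)
    (Y : Matrix (Fin p) (Fin m) F) :
    (fromBlocks M 0 0 Y).rank = n + Y.rank := by
  classical
  set S : Matrix (Fin n ⊕ Fin p) (Fin n ⊕ Fin m) F := fromBlocks M 0 0 Y with hS
  let j : (Fin m → F) →ₗ[F] ((Fin n ⊕ Fin m) → F) :=
    { toFun := fun y => Sum.elim 0 y
      map_add' := by intro a b; funext i; rcases i with i | i <;> simp
      map_smul' := by intro c a; funext i; rcases i with i | i <;> simp }
  have hj : Function.Injective j := by
    intro a b h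
    funext i
    simpa [j] using congrFun h (Sum.inr i)
  have hker : LinearMap.ker S.mulVecLin = (LinearMap.ker Y.mulVecLin).map j := by
    ext x
    simp only [LinearMap.mem_ker, Submodule.mem_map, mulVecLin_apply]
    constructor
    · intro hx
      have hx' : S *ᵥ (Sum.elim (x ∘ Sum.inl) (x ∘ Sum.inr)) = 0 := by
        rwa [Sum.elim_comp_inl_inr]
      rw [hS, fromBlocks_mulVec] at hx'
      have h1 : M *ᵥ (x ∘ Sum.inl) = 0 := by
        funext i
        simpa using congrFun hx' (Sum.inl i)
      have h2 : Y *ᵥ (x ∘ Sum.inr) = 0 := by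
        funext i
        simpa using congrFun hx' (Sum.inr i)
      have hxl : (x ∘ Sum.inl) = 0 :=
        eq_zero_of_mulVec_eq_zero (fun h0 => hM.ne_zero h0) h1
      refine ⟨x ∘ Sum.inr, h2, ?_⟩
      funext i
      rcases i with i | i
      · simpa [j] using (congrFun hxl i).symm
      · simp [j]
    · rintro ⟨y, hy, rfl⟩
      show S *ᵥ (Sum.elim 0 y) = 0
      rw [hS, fromBlocks_mulVec]
      funext i
      rcases i with i | i <;> simp [hy, mulVec_zero]
  have hrn₁ := LinearMap.finrank_range_add_finrank_ker S.mulVecLin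
  have hrn₂ := LinearMap.finrank_range_add_finrank_ker Y.mulVecLin
  have hkeq : Module.finrank F (LinearMap.ker S.mulVecLin)
      = Module.finrank F (LinearMap.ker Y.mulVecLin) := by
    rw [hker]
    exact ((Submodule.equivMapOfInjective j hj _).finrank_eq).symm
  have hd₁ : Module.finrank F ((Fin n ⊕ Fin m) → F) = n + m := by
    simp [Module.finrank_pi]
  have hd₂ : Module.finrank F (Fin m → F) = m := by
    simp [Module.finrank_pi]
  have hrS : S.rank = Module.finrank F (LinearMap.range S.mulVecLin) := rfl
  have hrY : Y.rank = Module.finrank F (LinearMap.range Y.mulVecLin) := rfl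
  rw [hd₁] at hrn₁
  rw [hd₂] at hrn₂
  omega

/-- the normal rank of the system matrix pencil
`S = [[A − λE, B], [C, D]]` equals `n` plus the normal rank of `G`. -/
theorem system_pencil_rank {n p m : ℕ}
    (A E : Matrix (Fin n) (Fin n) ℝ) (B : Matrix (Fin n) (Fin m) ℝ)
    (C : Matrix (Fin p) (Fin n) ℝ) (D : Matrix (Fin p) (Fin m) ℝ)
    (G : Matrix (Fin p) (Fin m) K)
    (hreg : (Lam • toK E - toK A).det ≠ 0)
    (hG : G = toK C * (Lam • toK E - toK A)⁻¹ * toK B + toK D) :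
    (Matrix.fromBlocks (toK A - Lam • toK E) (toK B) (toK C) (toK D)).rank
      = n + G.rank := by
  classical
  set M : Matrix (Fin n) (Fin n) K := toK A - Lam • toK E with hMdef
  have hMneg : Lam • toK E - toK A = -M := by rw [hMdef, neg_sub]
  have hMdet : IsUnit M.det := by
    rw [isUnit_iff_ne_zero, hMdef, ← neg_sub (Lam • toK E) (toK A), det_neg]
    exact mul_ne_zero (pow_ne_zero _ (neg_ne_zero.mpr one_ne_zero)) hreg
  have hMinv : M * M⁻¹ = 1 := mul_nonsing_inv M hMdet
  have hinvM : M⁻¹ * M = 1 := nonsing_inv_mul M hMdet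
  have hnegInv : (-M)⁻¹ = -M⁻¹ := by
    apply inv_eq_right_inv
    rw [neg_mul_neg, hMinv]
  have hGneg : G = toK D - toK C * M⁻¹ * toK B := by
    rw [hG, hMneg, hnegInv, Matrix.mul_neg, Matrix.neg_mul]
    abel
  have hfactor : fromBlocks M (toK B) (toK C) (toK D)
      = (fromBlocks (1 : Matrix (Fin n) (Fin n) K) 0 (toK C * M⁻¹) (1 : Matrix (Fin p) (Fin p) K))
        * fromBlocks M 0 0 (toK D - toK C * M⁻¹ * toK B)
        * (fromBlocks (1 : Matrix (Fin n) (Fin n) K) (M⁻¹ * toK B) 0 (1 : Matrix (Fin m) (Fin m) K)) := by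
    have hCM : toK C * M⁻¹ * M = toK C := by
      rw [Matrix.mul_assoc, hinvM, Matrix.mul_one]
    have hMB : M * (M⁻¹ * toK B) = toK B := by
      rw [← Matrix.mul_assoc, hMinv, Matrix.one_mul]
    rw [fromBlocks_multiply, fromBlocks_multiply]
    simp only [Matrix.one_mul, Matrix.mul_one, Matrix.zero_mul, Matrix.mul_zero,
      add_zero, zero_add, hCM, hMB]
    rw [add_comm, ← Matrix.mul_assoc, sub_add_cancel]
  have hL : IsUnit (fromBlocks (1 : Matrix (Fin n) (Fin n) K) 0 (toK C * M⁻¹) 1).det := by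
    rw [det_fromBlocks_zero₁₂]; simp
  have hR : IsUnit (fromBlocks (1 : Matrix (Fin n) (Fin n) K) (M⁻¹ * toK B) 0 1).det := by
    rw [det_fromBlocks_zero₂₁]; simp
  calc (fromBlocks (toK A - Lam • toK E) (toK B) (toK C) (toK D)).rank
      = (fromBlocks M (toK B) (toK C) (toK D)).rank := by rw [hMdef]
    _ = ((fromBlocks (1 : Matrix (Fin n) (Fin n) K) 0 (toK C * M⁻¹) (1 : Matrix (Fin p) (Fin p) K))
          * fromBlocks M 0 0 (toK D - toK C * M⁻¹ * toK B)
          * (fromBlocks (1 : Matrix (Fin n) (Fin n) K) (M⁻¹ * toK B) 0 (1 : Matrix (Fin m) (Fin m) K))).rank := by rw [hfactor]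
    _ = ((fromBlocks (1 : Matrix (Fin n) (Fin n) K) 0 (toK C * M⁻¹) (1 : Matrix (Fin p) (Fin p) K))
          * fromBlocks M 0 0 (toK D - toK C * M⁻¹ * toK B)).rank :=
        rank_mul_eq_left_of_isUnit_det _ _ hR
    _ = (fromBlocks M 0 0 (toK D - toK C * M⁻¹ * toK B)).rank :=
        rank_mul_eq_right_of_isUnit_det _ _ hL
    _ = n + (toK D - toK C * M⁻¹ * toK B).rank :=
        rank_fromBlocks_diag_aux M hMdet _
    _ = n + G.rank := by rw [← hGneg]
end
end

section
/- Let (A−λE, B, C, D) be a descriptor realization of order n of a square m×m matrix G = C·(λ•E − A)⁻¹·B + D over K = ℝ(λ), and suppose G is invertible over K, i.e. det G ≠ 0 in K. Form the augmented quadruple of order n+m with state matrices Ā = [[A, B],[C, D]] and Ē = [[E, 0],[0, 0]] (block matrices over ℝ), input matrix B̄ = [0; I_m] (an (n+m)×m matrix), output matrix C̄ = [0, −I_m] (an m×(n+m) matrix), and feedthrough D̄ = 0. Then the pencil Ā−λĒ is regular, i.e. det(λ•Ē − Ā) ≠ 0 in K, and C̄·(λ•Ē − Ā)⁻¹·B̄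 = G⁻¹ over K. -/
open Matrix

noncomputable section
set_option synthInstance.maxHeartbeats 1000000
set_option maxHeartbeats 1000000

/-- the augmented descriptor quadruple
`(Ā − λĒ, B̄, C̄, 0)` with `Ā = [[A,B],[C,D]]`, `Ē = [[E,0],[0,0]]`, `B̄ = [0; I]`,
`C̄ = [0, −I]` realizes the inverse `G⁻¹` of an invertible `G = C (λE − A)⁻¹ B + D`. -/
theorem inverse_realization {n m : ℕ}
    (A E : Matrix (Fin n) (Fin n) ℝ) (B : Matrix (Fin n) (Fin m) ℝ)
    (C : Matrix (Fin m) (Fin n) ℝ) (D : Matrix (Fin m) (Fin m) ℝ)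
    (G : Matrix (Fin m) (Fin m) K)
    (hreg : (Lam • toK E - toK A).det ≠ 0)
    (hG : G = toK C * (Lam • toK E - toK A)⁻¹ * toK B + toK D)
    (hGinv : G.det ≠ 0) :
    (Lam • toK (Matrix.fromBlocks E 0 0 (0 : Matrix (Fin m) (Fin m) ℝ))
        - toK (Matrix.fromBlocks A B C D)).det ≠ 0 ∧
    toK (Matrix.fromCols (0 : Matrix (Fin m) (Fin n) ℝ) (-1 : Matrix (Fin m) (Fin m) ℝ)) *
        (Lam • toK (Matrix.fromBlocks E 0 0 (0 : Matrix (Fin m) (Fin m) ℝ))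
          - toK (Matrix.fromBlocks A B C D))⁻¹ *
        toK (Matrix.fromRows (0 : Matrix (Fin n) (Fin m) ℝ) (1 : Matrix (Fin m) (Fin m) ℝ))
      = G⁻¹ := by
  set S : Matrix (Fin n) (Fin n) K := Lam • toK E - toK A with hSdef
  haveI : Invertible S := S.invertibleOfIsUnitDet (isUnit_iff_ne_zero.mpr hreg)
  -- the pencil as a block matrix
  have hM : Lam • toK (Matrix.fromBlocks E 0 0 (0 : Matrix (Fin m) (Fin m) ℝ))
      - toK (Matrix.fromBlocks A B C D)
      = Matrix.fromBlocks S (-(toK B)) (-(toK C)) (-(toK D)) := by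
    ext (i | i) (j | j) <;>
      simp [toK, hSdef, Matrix.fromBlocks, Matrix.sub_apply, Matrix.smul_apply]
  -- the Schur complement is `-G`
  have hSchur : -(toK D) - -(toK C) * ⅟ S * -(toK B) = -G := by
    rw [invOf_eq_nonsing_inv, hG]
    simp only [Matrix.neg_mul, Matrix.mul_neg, neg_neg, neg_add, sub_eq_add_neg]
    exact add_comm _ _
  haveI : Invertible (-G) := by
    refine Matrix.invertibleOfIsUnitDet _ (isUnit_iff_ne_zero.mpr ?_)
    rw [Matrix.det_neg]
    exact mul_ne_zero (pow_ne_zero _ (neg_ne_zero.mpr one_ne_zero)) hGinv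
  haveI : Invertible (-(toK D) - -(toK C) * ⅟ S * -(toK B)) := by
    rw [hSchur]; infer_instance
  haveI iM : Invertible (Matrix.fromBlocks S (-(toK B)) (-(toK C)) (-(toK D))) :=
    Matrix.fromBlocks₁₁Invertible _ _ _ _
  have hdet : (Matrix.fromBlocks S (-(toK B)) (-(toK C)) (-(toK D))).det ≠ 0 := by
    rw [Matrix.det_fromBlocks₁₁, hSchur]
    refine mul_ne_zero hreg ?_
    rw [Matrix.det_neg]
    exact mul_ne_zero (pow_ne_zero _ (neg_ne_zero.mpr one_ne_zero)) hGinv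
  constructor
  · rw [hM]; exact hdet
  · have hnegG : (-G)⁻¹ = -(G⁻¹) := by
      refine Matrix.inv_eq_left_inv ?_
      have := Matrix.nonsing_inv_mul G (isUnit_iff_ne_zero.mpr hGinv)
      simp only [Matrix.neg_mul, Matrix.mul_neg, neg_neg]
      exact this
    rw [hM, ← invOf_eq_nonsing_inv, Matrix.invOf_fromBlocks₁₁_eq]
    have hC : toK (Matrix.fromCols (0 : Matrix (Fin m) (Fin n) ℝ)
        (-1 : Matrix (Fin m) (Fin m) ℝ))
        = Matrix.fromCols (0 : Matrix (Fin m) (Fin n) K)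
          (-1 : Matrix (Fin m) (Fin m) K) := by
      ext i (j | j) <;> simp [toK, Matrix.fromCols, Matrix.one_apply, apply_ite]
    have hB : toK (Matrix.fromRows (0 : Matrix (Fin n) (Fin m) ℝ)
        (1 : Matrix (Fin m) (Fin m) ℝ))
        = Matrix.fromRows (0 : Matrix (Fin n) (Fin m) K)
          (1 : Matrix (Fin m) (Fin m) K) := by
      ext (i | i) j <;> simp [toK, Matrix.fromRows_apply_inl, Matrix.fromRows_apply_inr, Matrix.one_apply, apply_ite]
    rw [hC, hB, Matrix.fromCols_mul_fromBlocks, Matrix.fromCols_mul_fromRows]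
    have hSchur2 : -toK D - toK C * S⁻¹ * toK B = -G := by
      rw [hG]; abel
    simp only [invOf_eq_nonsing_inv, Matrix.neg_mul, Matrix.mul_neg, neg_neg]
    simp only [Matrix.zero_mul, Matrix.mul_zero, Matrix.mul_one, Matrix.one_mul,
      zero_add, add_zero, Matrix.neg_mul]
    rw [hSchur2, hnegG, neg_neg]
end
end

section
/- Let (A−λE, B, C, D) be a descriptor realization of order n of a square m×m matrix G = C·(λ•E − A)⁻¹·B + D over K = ℝ(λ), and suppose the real m×m matrix D is invertible and the pencil (A − B·D⁻¹·C) − λE is regular, i.e. det(λ•E − (A − B·D⁻¹·C)) ≠ 0 in K. Then the matrix H := D⁻¹ − D⁻¹·C·(λ•E − (A − B·D⁻¹·C))⁻¹·B·D⁻¹ over K satisfies G·H = I_m and H·G = I_m; in particular G is invertible over K and G⁻¹ = H. -/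
open Matrix

noncomputable section
set_option synthInstance.maxHeartbeats 1000000
set_option maxHeartbeats 1000000

/-- if `D` is invertible and the pencil `(A − B D⁻¹ C) − λE` is regular, then
`H = D⁻¹ − D⁻¹ C (λE − (A − B D⁻¹ C))⁻¹ B D⁻¹` is a two-sided inverse of
`G = C (λE − A)⁻¹ B + D`, so `G⁻¹ = H`. -/
theorem inverse_realization_invertible_D {n m : ℕ}
    (A E : Matrix (Fin n) (Fin n) ℝ) (B : Matrix (Fin n) (Fin m) ℝ)
    (C : Matrix (Fin m) (Fin n) ℝ) (D : Matrix (Fin m) (Fin m) ℝ)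
    (G : Matrix (Fin m) (Fin m) K)
    (hreg : (Lam • toK E - toK A).det ≠ 0)
    (hG : G = toK C * (Lam • toK E - toK A)⁻¹ * toK B + toK D)
    (hD : IsUnit D.det)
    (hreg' : (Lam • toK E - toK (A - B * D⁻¹ * C)).det ≠ 0) :
    G * (toK D⁻¹ - toK D⁻¹ * toK C * (Lam • toK E - toK (A - B * D⁻¹ * C))⁻¹ * toK B * toK D⁻¹)
      = 1 ∧
    (toK D⁻¹ - toK D⁻¹ * toK C * (Lam • toK E - toK (A - B * D⁻¹ * C))⁻¹ * toK B * toK D⁻¹) * G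
      = 1 ∧
    G⁻¹ = toK D⁻¹ - toK D⁻¹ * toK C * (Lam • toK E - toK (A - B * D⁻¹ * C))⁻¹ * toK B * toK D⁻¹
    := by

  set b := toK B with hb
  set c := toK C with hc
  set d := toK D with hd
  set e := toK D⁻¹ with he
  set Z := Lam • toK E - toK A with hZdef
  set Z' := Lam • toK E - toK (A - B * D⁻¹ * C) with hZ'def
  have hde : d * e = 1 := by
    rw [hd, he, toK, toK, ← Matrix.map_mul, Matrix.mul_nonsing_inv D hD,
      Matrix.map_one _ (map_zero _) (map_one _)]
  have hed : e * d = 1 := by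
    rw [hd, he, toK, toK, ← Matrix.map_mul, Matrix.nonsing_inv_mul D hD,
      Matrix.map_one _ (map_zero _) (map_one _)]
  have hZZ' : Z' = Z + b * e * c := by
    have hmap : toK (A - B * D⁻¹ * C) = toK A - toK B * toK D⁻¹ * toK C := by
      simp [toK, Matrix.map_sub, Matrix.map_mul]
    rw [hZ'def, hZdef, hb, he, hc, hmap]
    abel
  have hZu : IsUnit Z.det := isUnit_iff_ne_zero.mpr hreg
  have hZ'u : IsUnit Z'.det := isUnit_iff_ne_zero.mpr hreg'
  have h2 : Z⁻¹ * Z = 1 := Matrix.nonsing_inv_mul _ hZu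
  have h1 : Z * Z⁻¹ = 1 := Matrix.mul_nonsing_inv _ hZu
  have h3 : Z' * Z'⁻¹ = 1 := Matrix.mul_nonsing_inv _ hZ'u
  have h4 : Z'⁻¹ * Z' = 1 := Matrix.nonsing_inv_mul _ hZ'u
  have hbec : b * e * c = Z' - Z := by rw [hZZ']; abel
  have key1 : Z⁻¹ * (b * e * c) * Z'⁻¹ = Z⁻¹ - Z'⁻¹ := by
    rw [hbec, Matrix.mul_sub, Matrix.sub_mul, Matrix.mul_assoc, h3, mul_one, h2, one_mul]
  have key2 : Z'⁻¹ * (b * e * c) * Z⁻¹ = Z⁻¹ - Z'⁻¹ := by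
    rw [hbec, Matrix.mul_sub, Matrix.sub_mul, h4, one_mul, Matrix.mul_assoc, h1, mul_one]
  have h5 : c * Z⁻¹ * b * (e * c * Z'⁻¹ * b * e) = c * Z⁻¹ * b * e - c * Z'⁻¹ * b * e := by
    have step : c * Z⁻¹ * b * (e * c * Z'⁻¹ * b * e)
        = c * (Z⁻¹ * (b * e * c) * Z'⁻¹) * (b * e) := by
      simp only [Matrix.mul_assoc]
    rw [step, key1]
    simp only [Matrix.mul_sub, Matrix.sub_mul, Matrix.mul_assoc]
  have h6 : d * (e * c * Z'⁻¹ * b * e) = c * Z'⁻¹ * b * e := by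
    simp only [← Matrix.mul_assoc]
    rw [hde, Matrix.one_mul]
  have h7 : e * c * Z'⁻¹ * b * e * (c * Z⁻¹ * b) = e * c * Z⁻¹ * b - e * c * Z'⁻¹ * b := by
    have step : e * c * Z'⁻¹ * b * e * (c * Z⁻¹ * b)
        = e * c * (Z'⁻¹ * (b * e * c) * Z⁻¹) * b := by
      simp only [Matrix.mul_assoc]
    rw [step, key2]
    simp only [Matrix.mul_sub, Matrix.sub_mul, Matrix.mul_assoc]
  have h8 : e * c * Z'⁻¹ * b * e * d = e * c * Z'⁻¹ * b := by
    rw [Matrix.mul_assoc, hed, mul_one]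
  have hGH : G * (e - e * c * Z'⁻¹ * b * e) = 1 := by
    rw [hG, Matrix.add_mul, Matrix.mul_sub, Matrix.mul_sub, h5, h6, hde]
    abel
  have hHG : (e - e * c * Z'⁻¹ * b * e) * G = 1 := by
    rw [hG, Matrix.sub_mul, Matrix.mul_add, Matrix.mul_add, h7, h8, hed]
    simp only [← Matrix.mul_assoc]
    abel
  exact ⟨hGH, hHG, Matrix.inv_eq_right_inv hGH⟩
end
end

section
/- (Spectral separation of a regular pencil) Let A, E ∈ ℝ^{n×n} be such that the pencil A−λE is regular, i.e. det(X·E − A) ∈ ℝ[X] is not the zero polynomial, and let ℂ = ℂ_g ∪ ℂ_b be a partition of the complex plane into two disjoint sets, each closed under complex conjugation. Then there exist natural numbers n_g, n_b with n_g + n_b = n, invertible real matrices U, V ∈ ℝ^{n×n}, and real matrices A_g, E_g ∈ ℝ^{n_g×n_g}, A_b, E_b ∈ ℝ^{n_b×n_b} such that U·A·V = diag(A_g, A_b) and U·E·V = diag(E_g, E_b) (block diagonal), E_g is invertible, every complex root of the polynomial det(X·E_g − A_g) lies in ℂ_g, and every complex root of det(X·E_b − A_b) lies in ℂ_b. -/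
open Matrix

noncomputable section
set_option synthInstance.maxHeartbeats 1000000
set_option maxHeartbeats 1000000
set_option maxRecDepth 10000

open Polynomial


private lemma aux_two_roots {d : Polynomial ℝ} (hd : Irreducible d) {z w : ℂ}
    (hz : (d.map (algebraMap ℝ ℂ)).IsRoot z) (hw : (d.map (algebraMap ℝ ℂ)).IsRoot w) :
    w = z ∨ w = (starRingEnd ℂ) z := by
  have hd0 : d ≠ 0 := hd.ne_zero
  have hmap0 : d.map (algebraMap ℝ ℂ) ≠ 0 := Polynomial.map_ne_zero hd0
  have haev : Polynomial.aeval z d = 0 := by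
    rw [Polynomial.aeval_def, ← Polynomial.eval_map]; exact hz
  by_cases him : z.im = 0
  · have hzre : ((z.re : ℝ) : ℂ) = z := by
      apply Complex.ext <;> simp [him]
    have hz' : d.eval z.re = 0 := by
      have h2 : (algebraMap ℝ ℂ) (d.eval z.re) = 0 := by
        rw [← Polynomial.eval₂_at_apply, ← Polynomial.eval_map]
        show (d.map (algebraMap ℝ ℂ)).eval ((algebraMap ℝ ℂ) z.re) = 0
        have : (algebraMap ℝ ℂ) z.re = z := hzre
        rw [this]; exact hz
      exact (_root_.map_eq_zero (algebraMap ℝ ℂ)).mp h2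
    have hdeg : d.degree = 1 := Polynomial.degree_eq_one_of_irreducible_of_root hd hz'
    left
    by_contra hne
    have hzr : z ∈ (d.map (algebraMap ℝ ℂ)).roots := by
      rw [Polynomial.mem_roots hmap0]; exact hz
    have hwr : w ∈ (d.map (algebraMap ℝ ℂ)).roots := by
      rw [Polynomial.mem_roots hmap0]; exact hw
    have hsub : ({w, z} : Finset ℂ) ⊆ (d.map (algebraMap ℝ ℂ)).roots.toFinset := by
      intro x hx
      rw [Multiset.mem_toFinset]
      rcases Finset.mem_insert.mp hx with rfl | hx
      · exact hwr
      · rw [Finset.mem_singleton.mp hx]; exact hzr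
    have h2le : 2 ≤ (d.map (algebraMap ℝ ℂ)).roots.card := by
      calc 2 = ({w, z} : Finset ℂ).card := (Finset.card_pair hne).symm
        _ ≤ (d.map (algebraMap ℝ ℂ)).roots.toFinset.card := Finset.card_le_card hsub
        _ ≤ (d.map (algebraMap ℝ ℂ)).roots.card := Multiset.toFinset_card_le _
    have hcard := Polynomial.card_roots' (d.map (algebraMap ℝ ℂ))
    have hnd : (d.map (algebraMap ℝ ℂ)).natDegree = 1 := by
      rw [Polynomial.natDegree_map_eq_of_injective (algebraMap ℝ ℂ).injective]
      exact Polynomial.natDegree_eq_of_degree_eq_some hdeg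
    omega
  · obtain ⟨s, hs⟩ := d.mul_star_dvd_of_aeval_eq_zero_im_ne_zero haev him
    have hnd2 : d.natDegree ≤ 2 := hd.natDegree_le_two
    have hX1 : (X - Polynomial.C ((starRingEnd ℂ) z)) ≠ 0 := Polynomial.X_sub_C_ne_zero _
    have hX2 : (X - Polynomial.C z) ≠ 0 := Polynomial.X_sub_C_ne_zero _
    have hs0 : s ≠ 0 := by
      rintro rfl
      rw [mul_zero] at hs
      exact hmap0 hs
    have hql : ((X - Polynomial.C ((starRingEnd ℂ) z)) * (X - Polynomial.C z)).natDegree = 2 := by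
      rw [Polynomial.natDegree_mul hX1 hX2, Polynomial.natDegree_X_sub_C,
        Polynomial.natDegree_X_sub_C]
    have hnds : s.natDegree = 0 := by
      have := Polynomial.natDegree_mul (mul_ne_zero hX1 hX2) hs0
      rw [← hs] at this
      rw [Polynomial.natDegree_map_eq_of_injective (algebraMap ℝ ℂ).injective] at this
      omega
    obtain ⟨a, rfl⟩ := Polynomial.natDegree_eq_zero.mp hnds
    have ha : a ≠ 0 := fun h => hs0 (by rw [h, map_zero])
    have hev : ((starRingEnd ℂ) z - w) * ((z : ℂ) - w) * a = 0 := by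
      have := hw
      rw [hs] at this
      unfold Polynomial.IsRoot at this
      simp only [Polynomial.eval_mul, Polynomial.eval_sub, Polynomial.eval_X,
        Polynomial.eval_C] at this
      have h' : (w - (starRingEnd ℂ) z) * (w - z) * a = 0 := this
      calc ((starRingEnd ℂ) z - w) * ((z : ℂ) - w) * a
          = (w - (starRingEnd ℂ) z) * (w - z) * a := by ring
        _ = 0 := h'
    rcases mul_eq_zero.mp hev with h | h
    · rcases mul_eq_zero.mp h with h | h
      · right; exact (sub_eq_zero.mp h).symm
      · left; exact (sub_eq_zero.mp h).symm
    · exact absurd h ha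



private lemma coprime_mprod_right {q : Polynomial ℝ} {t : Multiset (Polynomial ℝ)}
    (h : ∀ e ∈ t, IsCoprime q e) : IsCoprime q t.prod := by
  induction t using Multiset.induction_on with
  | empty => simpa using isCoprime_one_right
  | cons a s ih =>
    rw [Multiset.prod_cons]
    exact (h a (Multiset.mem_cons_self a s)).mul_right
      (ih fun e he => h e (Multiset.mem_cons_of_mem he))

private lemma split_poly (p : Polynomial ℝ) (hp : p ≠ 0) (S : Set ℂ)
    (hS : ∀ z ∈ S, (starRingEnd ℂ) z ∈ S) :
    ∃ q r : Polynomial ℝ, p = q * r ∧ IsCoprime q r ∧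
      (∀ z, (q.map (algebraMap ℝ ℂ)).IsRoot z → z ∈ S) ∧
      (∀ z, (r.map (algebraMap ℝ ℂ)).IsRoot z → z ∉ S) := by
  classical
  have hSc : ∀ z, z ∉ S → (starRingEnd ℂ) z ∉ S := by
    intro z hz hcz
    exact hz (by simpa using hS _ hcz)
  obtain ⟨u, hu⟩ := (UniqueFactorizationMonoid.factors_prod hp)
  set fs := UniqueFactorizationMonoid.factors p with hfs
  have hirr : ∀ d ∈ fs, Irreducible d := fun d hd =>
    UniqueFactorizationMonoid.irreducible_of_factor d hd
  set good : Polynomial ℝ → Prop :=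
    fun d => ∀ z, (d.map (algebraMap ℝ ℂ)).IsRoot z → z ∈ S with hgood
  have key : ∀ d ∈ fs, ¬ good d → ∀ z, (d.map (algebraMap ℝ ℂ)).IsRoot z → z ∉ S := by
    intro d hd hbad z hz
    rw [hgood] at hbad
    simp only [not_forall, Classical.not_imp] at hbad
    obtain ⟨z0, hz0, hz0S⟩ := hbad
    rcases aux_two_roots (hirr d hd) hz0 hz with rfl | rfl
    · exact hz0S
    · exact hSc z0 hz0S
  -- root of a multiset product
  have prod_root : ∀ (t : Multiset (Polynomial ℝ)) (z : ℂ),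
      ((t.prod).map (algebraMap ℝ ℂ)).IsRoot z → ∃ d ∈ t, (d.map (algebraMap ℝ ℂ)).IsRoot z := by
    intro t z hz
    rw [Polynomial.map_multiset_prod] at hz
    unfold Polynomial.IsRoot at hz
    rw [show Polynomial.eval z ((t.map (Polynomial.map (algebraMap ℝ ℂ))).prod)
        = ((t.map (Polynomial.map (algebraMap ℝ ℂ))).map (Polynomial.eval z)).prod from
      (map_multiset_prod (Polynomial.evalRingHom z) _)] at hz
    rw [Multiset.map_map] at hz
    obtain ⟨d, hd, hd0⟩ := Multiset.mem_map.mp (Multiset.prod_eq_zero_iff.mp hz)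
    exact ⟨d, hd, hd0⟩
  refine ⟨(fs.filter good).prod,
    (fs.filter (fun d => ¬ good d)).prod * (u : Polynomial ℝ), ?_, ?_, ?_, ?_⟩
  · rw [← mul_assoc, ← Multiset.prod_add, Multiset.filter_add_not, hu]
  · apply IsCoprime.mul_right
    · apply coprime_mprod_right
      intro e he
      obtain ⟨hefs, hebad⟩ := Multiset.mem_filter.mp he
      refine IsCoprime.symm ?_
      apply coprime_mprod_right
      intro d hd
      obtain ⟨hdfs, hdgood⟩ := Multiset.mem_filter.mp hd
      rw [(hirr e hefs).coprime_iff_not_dvd]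
      intro hdvd
      have hdegpos : 0 < (e.map (algebraMap ℝ ℂ)).degree := by
        rw [Polynomial.degree_map_eq_of_injective (algebraMap ℝ ℂ).injective]
        exact Polynomial.degree_pos_of_irreducible (hirr e hefs)
      obtain ⟨z1, hz1⟩ := Complex.exists_root hdegpos
      have hz1d : (d.map (algebraMap ℝ ℂ)).IsRoot z1 := by
        obtain ⟨t, rfl⟩ := hdvd
        rw [Polynomial.map_mul]
        exact Polynomial.IsRoot.dvd hz1 (Dvd.intro _ rfl)
      exact key e hefs hebad z1 hz1 (hdgood z1 hz1d)
    · obtain ⟨v, hv, hCv⟩ := Polynomial.isUnit_iff.mp u.isUnit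
      refine ⟨0, Polynomial.C v⁻¹, ?_⟩
      rw [← hCv, zero_mul, zero_add, ← Polynomial.C_mul, inv_mul_cancel₀ hv.ne_zero,
        Polynomial.C_1]
  · intro z hz
    obtain ⟨d, hd, hdz⟩ := prod_root _ z hz
    exact (Multiset.mem_filter.mp hd).2 z hdz
  · intro z hz
    unfold Polynomial.IsRoot at hz
    rw [Polynomial.map_mul, Polynomial.eval_mul] at hz
    rcases mul_eq_zero.mp hz with h | h
    · obtain ⟨d, hd, hdz⟩ := prod_root _ z h
      obtain ⟨hdfs, hdb⟩ := Multiset.mem_filter.mp hd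
      exact key d hdfs hdb z hdz
    · exfalso
      obtain ⟨v, hv, hCv⟩ := Polynomial.isUnit_iff.mp u.isUnit
      rw [← hCv] at h
      simp only [Polynomial.map_C, Polynomial.eval_C] at h
      exact hv.ne_zero ((_root_.map_eq_zero (algebraMap ℝ ℂ)).mp h)


-- aeval of a restriction
private lemma aeval_restrict_apply {R M : Type*} [CommRing R] [AddCommGroup M] [Module R M]
    {f : M →ₗ[R] M} {K : Submodule R M} (hf : ∀ x ∈ K, f x ∈ K) (s : Polynomial R) (v : K) :
    ((Polynomial.aeval (f.restrict hf) s) v : M) = (Polynomial.aeval f s) v := by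
  induction s using Polynomial.induction_on' with
  | add p q hp hq => simp [hp, hq]
  | monomial k a =>
    simp only [Polynomial.aeval_monomial]
    rw [Module.End.mul_apply, Module.End.mul_apply, Module.algebraMap_end_apply,
      Module.algebraMap_end_apply, Module.End.pow_restrict]
    simp [LinearMap.restrict_coe_apply]

-- toMatrix through a basis map
private lemma toMatrix_basis_map {R M N ι : Type*} [CommRing R] [AddCommGroup M] [AddCommGroup N]
    [Module R M] [Module R N] [Fintype ι] [DecidableEq ι]
    (b : Module.Basis ι R M) (e : M ≃ₗ[R] N) (f : N →ₗ[R] N) :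
    LinearMap.toMatrix (b.map e) (b.map e) f = LinearMap.toMatrix b b (e.symm.conj f) := by
  ext i j
  rw [LinearMap.toMatrix_apply, LinearMap.toMatrix_apply, Module.Basis.map_apply]
  simp [LinearEquiv.conj_apply]

-- toMatrix through a basis reindex
private lemma toMatrix_basis_reindex {R M ι ι' : Type*} [CommRing R] [AddCommGroup M]
    [Module R M] [Fintype ι] [DecidableEq ι] [Fintype ι'] [DecidableEq ι']
    (b : Module.Basis ι R M) (σ : ι ≃ ι') (f : M →ₗ[R] M) :
    LinearMap.toMatrix (b.reindex σ) (b.reindex σ) f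
      = Matrix.reindex σ σ (LinearMap.toMatrix b b f) := by
  ext i j
  rw [LinearMap.toMatrix_apply, Matrix.reindex_apply, Matrix.submatrix_apply,
    LinearMap.toMatrix_apply, Module.Basis.reindex_apply]
  simp

-- the root-location computation for a block
private lemma block_root_mem {m : ℕ} (D : Matrix (Fin m) (Fin m) ℝ) (c : ℝ) (q : Polynomial ℝ)
    (hD : Polynomial.aeval D q = 0) {z : ℂ}
    (hz : (((Polynomial.X : Polynomial ℝ) • D.map Polynomial.C -
        ((c • D - 1) : Matrix (Fin m) (Fin m) ℝ).map Polynomial.C).det.map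
        (algebraMap ℝ ℂ)).IsRoot z) :
    ∃ μ : ℂ, μ ≠ 0 ∧ (q.map (algebraMap ℝ ℂ)).IsRoot μ ∧ z = (c : ℂ) - μ⁻¹ := by
  classical
  set N : Matrix (Fin m) (Fin m) ℂ := D.map (algebraMap ℝ ℂ) with hN
  -- evaluate the determinant polynomial at z
  set φ : Polynomial ℝ →+* ℂ :=
    (Polynomial.evalRingHom z).comp (Polynomial.mapRingHom (algebraMap ℝ ℂ)) with hφ
  have hev : ((z - (c : ℂ)) • N + 1).det = 0 := by
    have h1 : φ (((Polynomial.X : Polynomial ℝ) • D.map Polynomial.C -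
        ((c • D - 1) : Matrix (Fin m) (Fin m) ℝ).map Polynomial.C).det)
        = ((((Polynomial.X : Polynomial ℝ) • D.map Polynomial.C -
        ((c • D - 1) : Matrix (Fin m) (Fin m) ℝ).map Polynomial.C)).map φ).det :=
      RingHom.map_det φ _
    have h2 : (((Polynomial.X : Polynomial ℝ) • D.map Polynomial.C -
        ((c • D - 1) : Matrix (Fin m) (Fin m) ℝ).map Polynomial.C)).map φ
        = (z - (c : ℂ)) • N + 1 := by
      ext i j
      simp only [Matrix.map_apply, Matrix.sub_apply, Matrix.smul_apply, Matrix.add_apply,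
        smul_eq_mul, hφ, RingHom.comp_apply, Polynomial.coe_mapRingHom,
        Polynomial.coe_evalRingHom, map_sub, Polynomial.map_mul,
        Polynomial.map_C, Polynomial.map_X, Polynomial.eval_C,
        Polynomial.eval_X, Polynomial.eval_mul, hN, Matrix.one_apply, apply_ite,
        _root_.map_one, _root_.map_zero, Complex.coe_algebraMap]
      by_cases hij : i = j <;> simp only [hij, if_true, if_false] <;> push_cast <;> ring
    have h3 : φ ((((Polynomial.X : Polynomial ℝ) • D.map Polynomial.C -
        ((c • D - 1) : Matrix (Fin m) (Fin m) ℝ).map Polynomial.C)).det) = 0 := by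
      rw [hφ, RingHom.comp_apply, Polynomial.coe_mapRingHom, Polynomial.coe_evalRingHom]
      exact hz
    rw [h1, h2] at h3
    exact h3
  have hzc : z ≠ (c : ℂ) := by
    rintro rfl
    rw [sub_self, zero_smul, zero_add, Matrix.det_one] at hev
    exact one_ne_zero hev
  set μ : ℂ := ((c : ℂ) - z)⁻¹ with hμ
  have hcz : (c : ℂ) - z ≠ 0 := sub_ne_zero.mpr (Ne.symm hzc)
  have hμ0 : μ ≠ 0 := inv_ne_zero hcz
  -- factor the determinant
  have key : ((z - (c : ℂ)) • N + 1) = (z - (c : ℂ)) • (N - μ • 1) := by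
    rw [smul_sub, smul_smul]
    have hm1 : (z - (c : ℂ)) * μ = -1 := by
      rw [hμ, ← neg_sub, neg_mul, mul_inv_cancel₀ hcz]
    rw [hm1]
    simp [sub_eq_add_neg]
  rw [key, Matrix.det_smul] at hev
  have hdet0 : (N - μ • 1).det = 0 := by
    have hzc' : (z - (c : ℂ)) ≠ 0 := sub_ne_zero.mpr hzc
    rcases mul_eq_zero.mp hev with h | h
    · exact absurd h (pow_ne_zero _ hzc')
    · exact h
  -- eigenvector
  obtain ⟨w, hw0, hww⟩ := (Matrix.exists_mulVec_eq_zero_iff).mpr hdet0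
  have hNw : N *ᵥ w = μ • w := by
    rw [Matrix.sub_mulVec, Matrix.smul_mulVec, Matrix.one_mulVec] at hww
    have := sub_eq_zero.mp hww
    exact this
  -- transfer `aeval D q = 0` to `N`
  have hNq : Polynomial.aeval N q = 0 := by
    have h := Polynomial.aeval_algHom_apply
      ((Algebra.ofId ℝ ℂ).mapMatrix : Matrix (Fin m) (Fin m) ℝ →ₐ[ℝ] Matrix (Fin m) (Fin m) ℂ) D q
    rw [hD, map_zero] at h
    have hDN : (Algebra.ofId ℝ ℂ).mapMatrix D = N := by
      ext i j
      simp [AlgHom.mapMatrix_apply, Algebra.ofId_apply, hN]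
    rwa [hDN] at h
  set g := Matrix.toLinAlgEquiv' N with hg
  have hgev : Module.End.HasEigenvector g μ w := by
    refine ⟨Module.End.mem_eigenspace_iff.mpr ?_, hw0⟩
    rw [hg]
    rw [Matrix.toLinAlgEquiv'_apply]
    exact hNw
  have hgq : Polynomial.aeval g (q.map (algebraMap ℝ ℂ)) = 0 := by
    rw [Polynomial.aeval_map_algebraMap]
    have h2 := Polynomial.aeval_algHom_apply
      (((Matrix.toLinAlgEquiv' : Matrix (Fin m) (Fin m) ℂ ≃ₐ[ℂ] _).toAlgHom.restrictScalars ℝ)) N q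
    simp only [AlgHom.coe_restrictScalars', AlgEquiv.toAlgHom_eq_coe, AlgHom.coe_coe] at h2
    rw [hg]; refine h2.trans ?_; rw [hNq, map_zero]
  have : (Polynomial.aeval g (q.map (algebraMap ℝ ℂ))) w
      = Polynomial.eval μ (q.map (algebraMap ℝ ℂ)) • w :=
    Module.End.aeval_apply_of_hasEigenvector hgev
  rw [hgq, LinearMap.zero_apply] at this
  have hroot : Polynomial.eval μ (q.map (algebraMap ℝ ℂ)) = 0 := by
    rcases smul_eq_zero.mp this.symm with h | h
    · exact h
    · exact absurd h hw0
  refine ⟨μ, hμ0, hroot, ?_⟩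
  rw [hμ, inv_inv]
  ring

/-- spectral separation of a regular real pencil `A − λE` with respect to a
partition `ℂ = ℂ_g ∪ ℂ_b` of the complex plane into disjoint sets closed under conjugation. -/


theorem spectral_separation {n : ℕ} (A E : Matrix (Fin n) (Fin n) ℝ)
    (hreg : ((Polynomial.X : Polynomial ℝ) • E.map Polynomial.C - A.map Polynomial.C).det ≠ 0)
    (Cg Cb : Set ℂ)
    (hunion : Cg ∪ Cb = Set.univ) (hdisj : Cg ∩ Cb = ∅)
    (hgconj : ∀ z ∈ Cg, (starRingEnd ℂ) z ∈ Cg)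
    (hbconj : ∀ z ∈ Cb, (starRingEnd ℂ) z ∈ Cb) :
    ∃ (ng nb : ℕ) (h : ng + nb = n)
      (U V : Matrix (Fin n) (Fin n) ℝ)
      (Ag Eg : Matrix (Fin ng) (Fin ng) ℝ) (Ab Eb : Matrix (Fin nb) (Fin nb) ℝ),
      IsUnit U.det ∧ IsUnit V.det ∧
      U * A * V = Matrix.reindex (finSumFinEquiv.trans (finCongr h))
        (finSumFinEquiv.trans (finCongr h)) (Matrix.fromBlocks Ag 0 0 Ab) ∧
      U * E * V = Matrix.reindex (finSumFinEquiv.trans (finCongr h))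
        (finSumFinEquiv.trans (finCongr h)) (Matrix.fromBlocks Eg 0 0 Eb) ∧
      IsUnit Eg.det ∧
      (∀ z : ℂ, (((Polynomial.X : Polynomial ℝ) • Eg.map Polynomial.C -
        Ag.map Polynomial.C).det.map (algebraMap ℝ ℂ)).IsRoot z → z ∈ Cg) ∧
      (∀ z : ℂ, (((Polynomial.X : Polynomial ℝ) • Eb.map Polynomial.C -
        Ab.map Polynomial.C).det.map (algebraMap ℝ ℂ)).IsRoot z → z ∈ Cb) := by
  classical
  -- choose a real point where the pencil determinant does not vanish
  obtain ⟨c, hc⟩ : ∃ c : ℝ, Polynomial.eval c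
      (((Polynomial.X : Polynomial ℝ) • E.map Polynomial.C - A.map Polynomial.C).det) ≠ 0 := by
    by_contra h
    push_neg at h
    apply hreg
    apply Polynomial.eq_zero_of_infinite_isRoot
    have huniv : {x : ℝ | (((Polynomial.X : Polynomial ℝ) • E.map Polynomial.C -
        A.map Polynomial.C).det).IsRoot x} = Set.univ := Set.eq_univ_of_forall h
    rw [huniv]
    exact Set.infinite_univ
  set B : Matrix (Fin n) (Fin n) ℝ := c • E - A with hB
  have hBdet : IsUnit B.det := by
    apply isUnit_iff_ne_zero.mpr
    intro h0
    apply hc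
    have h1 := RingHom.map_det (Polynomial.evalRingHom c)
      ((Polynomial.X : Polynomial ℝ) • E.map Polynomial.C - A.map Polynomial.C)
    have h2 : ((Polynomial.X : Polynomial ℝ) • E.map Polynomial.C -
        A.map Polynomial.C).map (Polynomial.evalRingHom c) = c • E - A := by
      ext i j
      have h3 : ((Polynomial.X : Polynomial ℝ) • E.map Polynomial.C - A.map Polynomial.C) i j
          = Polynomial.X * Polynomial.C (E i j) - Polynomial.C (A i j) := rfl
      rw [Matrix.map_apply, h3, Polynomial.coe_evalRingHom, Polynomial.eval_sub,
        Polynomial.eval_mul, Polynomial.eval_X, Polynomial.eval_C, Polynomial.eval_C,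
        Matrix.sub_apply, Matrix.smul_apply, smul_eq_mul]
    rw [RingHom.mapMatrix_apply, h2, ← hB, h0] at h1
    exact h1
  have hBinv : B⁻¹ * B = 1 := Matrix.nonsing_inv_mul B hBdet
  have hBinv' : B * B⁻¹ = 1 := Matrix.mul_nonsing_inv B hBdet
  set M : Matrix (Fin n) (Fin n) ℝ := B⁻¹ * E with hM
  have hBA : B⁻¹ * A = c • M - 1 := by
    have hA : A = c • E - B := by rw [hB, sub_sub_cancel]
    rw [hA, Matrix.mul_sub, Matrix.mul_smul, hBinv, hM]
  set S : Set ℂ := {μ : ℂ | μ ≠ 0 ∧ (c : ℂ) - μ⁻¹ ∈ Cg} with hSdef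
  have hSconj : ∀ z ∈ S, (starRingEnd ℂ) z ∈ S := by
    intro z hz
    obtain ⟨hz0, hzg⟩ := hz
    refine ⟨by simpa using hz0, ?_⟩
    have hc2 : (c : ℂ) - ((starRingEnd ℂ) z)⁻¹ = (starRingEnd ℂ) ((c : ℂ) - z⁻¹) := by
      rw [map_sub, map_inv₀, Complex.conj_ofReal]
    rw [hc2]
    exact hgconj _ hzg
  obtain ⟨qg, qb, hmul, hcop, hrg, hrb⟩ :=
    split_poly M.charpoly (M.charpoly_monic.ne_zero) S hSconj
  set f : (Fin n → ℝ) →ₗ[ℝ] (Fin n → ℝ) := Matrix.toLinAlgEquiv' M with hf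
  have hfaev : ∀ s : Polynomial ℝ,
      Polynomial.aeval f s = Matrix.toLinAlgEquiv' (Polynomial.aeval M s) := by
    intro s
    rw [hf]
    exact Polynomial.aeval_algHom_apply
      (Matrix.toLinAlgEquiv' : Matrix (Fin n) (Fin n) ℝ ≃ₐ[ℝ] _) M s
  have hfchi : Polynomial.aeval f M.charpoly = 0 := by
    rw [hfaev, Matrix.aeval_self_charpoly, map_zero]
  set Kg := LinearMap.ker (Polynomial.aeval f qg) with hKg
  set Kb := LinearMap.ker (Polynomial.aeval f qb) with hKb
  have hcompl : IsCompl Kg Kb := by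
    constructor
    · exact Polynomial.disjoint_ker_aeval_of_isCoprime f hcop
    · rw [codisjoint_iff, hKg, hKb,
        Polynomial.sup_ker_aeval_eq_ker_aeval_mul_of_coprime f hcop, ← hmul, hfchi]
      exact LinearMap.ker_zero
  have hinv : ∀ (q : Polynomial ℝ) (x : Fin n → ℝ), x ∈ LinearMap.ker (Polynomial.aeval f q)
      → f x ∈ LinearMap.ker (Polynomial.aeval f q) := by
    intro q x hx
    rw [LinearMap.mem_ker] at hx ⊢
    have hcomm : (Polynomial.aeval f q) * f = f * (Polynomial.aeval f q) := by
      calc (Polynomial.aeval f q) * f = Polynomial.aeval f (q * Polynomial.X) := by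
            rw [_root_.map_mul, Polynomial.aeval_X]
        _ = Polynomial.aeval f (Polynomial.X * q) := by rw [mul_comm]
        _ = f * Polynomial.aeval f q := by rw [_root_.map_mul, Polynomial.aeval_X]
    calc (Polynomial.aeval f q) (f x) = ((Polynomial.aeval f q) * f) x := rfl
      _ = (f * (Polynomial.aeval f q)) x := by rw [hcomm]
      _ = f ((Polynomial.aeval f q) x) := rfl
      _ = 0 := by rw [hx, map_zero]
  have hfg : ∀ x ∈ Kg, f x ∈ Kg := fun x hx => hinv qg x hx
  have hfb : ∀ x ∈ Kb, f x ∈ Kb := fun x hx => hinv qb x hx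
  set F := f.restrict hfg with hF
  set G := f.restrict hfb with hG
  have hqgF : Polynomial.aeval F qg = 0 := by
    apply LinearMap.ext
    intro v
    have h2 : ((Polynomial.aeval F qg) v : Fin n → ℝ) = (Polynomial.aeval f qg) v :=
      aeval_restrict_apply hfg qg v
    have hv : (Polynomial.aeval f qg) (v : Fin n → ℝ) = 0 := LinearMap.mem_ker.mp v.2
    apply Subtype.ext
    rw [h2, hv]
    rfl
  have hqbG : Polynomial.aeval G qb = 0 := by
    apply LinearMap.ext
    intro v
    have h2 : ((Polynomial.aeval G qb) v : Fin n → ℝ) = (Polynomial.aeval f qb) v :=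
      aeval_restrict_apply hfb qb v
    have hv : (Polynomial.aeval f qb) (v : Fin n → ℝ) = 0 := LinearMap.mem_ker.mp v.2
    apply Subtype.ext
    rw [h2, hv]
    rfl
  set ng := Module.finrank ℝ Kg with hng
  set nb := Module.finrank ℝ Kb with hnb
  have hn : ng + nb = n := by
    have h1 := Submodule.finrank_add_eq_of_isCompl hcompl
    rwa [Module.finrank_fin_fun] at h1
  set bg : Module.Basis (Fin ng) ℝ Kg := Module.finBasis ℝ Kg with hbg
  set bb : Module.Basis (Fin nb) ℝ Kb := Module.finBasis ℝ Kb with hbb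
  set e := Submodule.prodEquivOfIsCompl Kg Kb hcompl with he
  have hψ : F.prodMap G = e.symm.conj f := by
    apply (bg.prod bb).ext
    simp only [Module.Basis.prod_apply, LinearMap.coe_inl, LinearMap.coe_inr, LinearMap.prodMap_apply,
      LinearEquiv.conj_apply, LinearEquiv.symm_symm, Submodule.coe_prodEquivOfIsCompl,
      LinearMap.coe_comp, LinearEquiv.coe_coe, Function.comp_apply, LinearMap.coprod_apply,
      Submodule.coe_subtype, map_add, Sum.forall, Sum.elim_inl, map_zero,
      ZeroMemClass.coe_zero, add_zero, LinearEquiv.eq_symm_apply, and_self,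
      Submodule.coe_prodEquivOfIsCompl', LinearMap.restrict_coe_apply, implies_true,
      Sum.elim_inr, zero_add, he, hF, hG]
  set Dg : Matrix (Fin ng) (Fin ng) ℝ := LinearMap.toMatrix bg bg F with hDg
  set Db : Matrix (Fin nb) (Fin nb) ℝ := LinearMap.toMatrix bb bb G with hDb
  set σ : (Fin ng ⊕ Fin nb) ≃ Fin n := finSumFinEquiv.trans (finCongr hn) with hσ
  set bsum : Module.Basis (Fin ng ⊕ Fin nb) ℝ (Fin n → ℝ) := (bg.prod bb).map e with hbsum
  set b' : Module.Basis (Fin n) ℝ (Fin n → ℝ) := bsum.reindex σ with hb'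
  have htm : LinearMap.toMatrix b' b' f = Matrix.reindex σ σ (Matrix.fromBlocks Dg 0 0 Db) := by
    rw [hb', toMatrix_basis_reindex, hbsum, toMatrix_basis_map, ← hψ,
      LinearMap.toMatrix_prodMap, hDg, hDb]
  set stdb : Module.Basis (Fin n) ℝ (Fin n → ℝ) := Pi.basisFun ℝ (Fin n) with hstd
  have hMmat : LinearMap.toMatrix stdb stdb f = M := by
    rw [hstd, LinearMap.toMatrix_eq_toMatrix', hf]
    exact LinearMap.toMatrixAlgEquiv'_toLinAlgEquiv' M
  set P : Matrix (Fin n) (Fin n) ℝ := stdb.toMatrix b' with hP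
  set Pinv : Matrix (Fin n) (Fin n) ℝ := b'.toMatrix stdb with hPinv
  have hPP : P * Pinv = 1 := by rw [hP, hPinv]; exact Module.Basis.toMatrix_mul_toMatrix_flip _ _
  have hPP' : Pinv * P = 1 := by rw [hP, hPinv]; exact Module.Basis.toMatrix_mul_toMatrix_flip _ _
  have hblock : Pinv * M * P = Matrix.reindex σ σ (Matrix.fromBlocks Dg 0 0 Db) := by
    rw [← htm, ← hMmat, hPinv, hP]
    exact basis_toMatrix_mul_linearMap_toMatrix_mul_basis_toMatrix _ _ _ _ _
  -- matrix aeval vanishing for the blocks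
  have hDgq : Polynomial.aeval Dg qg = 0 := by
    have h2 := Polynomial.aeval_algHom_apply
      ((LinearMap.toMatrixAlgEquiv bg : (Kg →ₗ[ℝ] Kg) ≃ₐ[ℝ] Matrix (Fin ng) (Fin ng) ℝ)) F qg
    rw [hqgF, map_zero] at h2
    rw [hDg]
    rw [show LinearMap.toMatrix bg bg F = LinearMap.toMatrixAlgEquiv bg F from rfl]
    exact h2
  have hDbq : Polynomial.aeval Db qb = 0 := by
    have h2 := Polynomial.aeval_algHom_apply
      ((LinearMap.toMatrixAlgEquiv bb : (Kb →ₗ[ℝ] Kb) ≃ₐ[ℝ] Matrix (Fin nb) (Fin nb) ℝ)) G qb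
    rw [hqbG, map_zero] at h2
    rw [hDb]
    rw [show LinearMap.toMatrix bb bb G = LinearMap.toMatrixAlgEquiv bb G from rfl]
    exact h2
  -- invertibility of the good block
  have hcoeff : qg.coeff 0 ≠ 0 := by
    intro h0
    have hroot0 : (qg.map (algebraMap ℝ ℂ)).IsRoot 0 := by
      show Polynomial.eval 0 (qg.map (algebraMap ℝ ℂ)) = 0
      rw [Polynomial.eval_map, Polynomial.eval₂_at_zero, h0, map_zero]
    exact (hrg 0 hroot0).1 rfl
  have hDgdet : IsUnit Dg.det := by
    have hFinj : LinearMap.ker F = ⊥ := by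
      rw [LinearMap.ker_eq_bot']
      intro v hv
      have h1 : Polynomial.aeval F qg v = 0 := by rw [hqgF]; rfl
      rw [← Polynomial.divX_mul_X_add qg, map_add, _root_.map_mul, Polynomial.aeval_X,
        Polynomial.aeval_C, LinearMap.add_apply, Module.End.mul_apply, hv, map_zero,
        Module.algebraMap_end_apply] at h1
      rw [zero_add] at h1
      exact (smul_eq_zero.mp h1).resolve_left hcoeff
    have hFunit : IsUnit F := (LinearMap.isUnit_iff_ker_eq_bot F).mpr hFinj
    have hDgu : IsUnit Dg := by
      rw [hDg, show LinearMap.toMatrix bg bg F = LinearMap.toMatrixAlgEquiv bg F from rfl]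
      exact hFunit.map (LinearMap.toMatrixAlgEquiv bg)
    exact (Matrix.isUnit_iff_isUnit_det Dg).mp hDgu
  -- assemble
  refine ⟨ng, nb, hn, Pinv * B⁻¹, P, c • Dg - 1, Dg, c • Db - 1, Db, ?_, ?_, ?_, ?_, hDgdet, ?_, ?_⟩
  · rw [Matrix.det_mul]
    exact (IsUnit.of_mul_eq_one P.det
      (by rw [← Matrix.det_mul, hPP', Matrix.det_one])).mul
      (Matrix.isUnit_nonsing_inv_det B hBdet)
  · exact IsUnit.of_mul_eq_one Pinv.det (by rw [← Matrix.det_mul, hPP, Matrix.det_one])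
  · have h1 : Pinv * B⁻¹ * A * P = Pinv * (B⁻¹ * A) * P := by
      rw [Matrix.mul_assoc Pinv B⁻¹ A]
    rw [h1, hBA, Matrix.mul_sub, Matrix.sub_mul, Matrix.mul_smul, Matrix.smul_mul,
      Matrix.mul_one, hPP', hblock]
    have hsm : c • (Matrix.reindex σ σ (Matrix.fromBlocks Dg 0 0 Db)) - 1
        = Matrix.reindex σ σ (c • (Matrix.fromBlocks Dg 0 0 Db) - 1) := by
      ext i j
      simp only [Matrix.reindex_apply, Matrix.submatrix_apply, Matrix.sub_apply,
        Matrix.smul_apply, smul_eq_mul, Matrix.one_apply]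
      congr 1
      by_cases hij : i = j
      · simp [hij]
      · have hij' : σ.symm i ≠ σ.symm j := fun hcc => hij (σ.symm.injective hcc)
        simp [hij, hij']
    rw [hsm, hσ]
    congr 1
    rw [← Matrix.fromBlocks_one (l := Fin ng) (m := Fin nb) (α := ℝ), Matrix.fromBlocks_smul]
    ext (i | i) (j | j) <;>
      simp [Matrix.fromBlocks, Matrix.sub_apply, Matrix.smul_apply]
  · have h1 : Pinv * B⁻¹ * E * P = Pinv * M * P := by
      rw [Matrix.mul_assoc Pinv B⁻¹ E, ← hM]
    rw [h1, hblock, hσ]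
  · intro z hz
    obtain ⟨μ, hμ0, hμroot, hzc⟩ := block_root_mem Dg c qg hDgq hz
    have hμS : μ ∈ S := hrg μ hμroot
    rw [hzc]
    exact hμS.2
  · intro z hz
    obtain ⟨μ, hμ0, hμroot, hzc⟩ := block_root_mem Db c qb hDbq hz
    have hμS : μ ∉ S := hrb μ hμroot
    have hnotg : (c : ℂ) - μ⁻¹ ∉ Cg := fun hgg => hμS ⟨hμ0, hgg⟩
    have hz' : z ∈ Cg ∪ Cb := by rw [hunion]; trivial
    rcases hz' with h | h
    · rw [hzc] at h
      exact absurd h hnotg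
    · exact h
end
end

section
/- Let (A−λE, B, C, D) be a descriptor realization of order n of the p×m matrix G over K = ℝ(λ), and let F ∈ ℝ^{m×n} be such that the pencil (A+BF)−λE is also regular, i.e. det(λ•E − (A+BF)) ≠ 0 in K. Define M = I_m + F·(λ•E − (A+BF))⁻¹·B over K. Then M is invertible over K and M⁻¹ = I_m − F·(λ•E − A)⁻¹·B. -/
open Matrix

noncomputable section
set_option synthInstance.maxHeartbeats 1000000
set_option maxHeartbeats 1000000

/-- for a state-feedback `F` keeping the pencil regular,
`M = I + F (λE − (A+BF))⁻¹ B` is invertible with `M⁻¹ = I − F (λE − A)⁻¹ B`. -/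
theorem feedback_denominator_inverse {n p m : ℕ}
    (A E : Matrix (Fin n) (Fin n) ℝ) (B : Matrix (Fin n) (Fin m) ℝ)
    (C : Matrix (Fin p) (Fin n) ℝ) (D : Matrix (Fin p) (Fin m) ℝ)
    (G : Matrix (Fin p) (Fin m) K)
    (hreg : (Lam • toK E - toK A).det ≠ 0)
    (hG : G = toK C * (Lam • toK E - toK A)⁻¹ * toK B + toK D)
    (F : Matrix (Fin m) (Fin n) ℝ)
    (hregF : (Lam • toK E - toK (A + B * F)).det ≠ 0) :
    IsUnit ((1 : Matrix (Fin m) (Fin m) K)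
        + toK F * (Lam • toK E - toK (A + B * F))⁻¹ * toK B).det ∧
    ((1 : Matrix (Fin m) (Fin m) K)
        + toK F * (Lam • toK E - toK (A + B * F))⁻¹ * toK B)⁻¹
      = (1 : Matrix (Fin m) (Fin m) K) - toK F * (Lam • toK E - toK A)⁻¹ * toK B := by
  set P : Matrix (Fin n) (Fin n) K := Lam • toK E - toK A with hPdef
  set Q : Matrix (Fin n) (Fin n) K := Lam • toK E - toK (A + B * F) with hQdef
  have hmap : toK (A + B * F) = toK A + toK B * toK F := by
    ext i j
    simp [toK, Matrix.add_apply, Matrix.mul_apply, map_sum]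
  have hPQ : toK B * toK F = P - Q := by
    rw [hPdef, hQdef, hmap]; abel
  have hPdet : IsUnit P.det := isUnit_iff_ne_zero.mpr hreg
  have hQdet : IsUnit Q.det := isUnit_iff_ne_zero.mpr hregF
  have hPP : P * P⁻¹ = 1 := Matrix.mul_nonsing_inv P hPdet
  have hQQ : Q⁻¹ * Q = 1 := Matrix.nonsing_inv_mul Q hQdet
  clear_value P Q
  set X := toK F * Q⁻¹ * toK B with hX
  set Y := toK F * P⁻¹ * toK B with hY
  have h2 : Q⁻¹ * (toK B * toK F) * P⁻¹ = Q⁻¹ - P⁻¹ := by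
    rw [hPQ, Matrix.mul_sub, Matrix.sub_mul, Matrix.mul_assoc Q⁻¹ P P⁻¹, hPP,
      Matrix.mul_one, hQQ, Matrix.one_mul]
  have hXY : X * Y = X - Y := by
    have h3 : X * Y = toK F * (Q⁻¹ * (toK B * toK F) * P⁻¹) * toK B := by
      rw [hX, hY]; simp only [Matrix.mul_assoc]
    rw [h3, h2, Matrix.mul_sub, Matrix.sub_mul, hX, hY]
  have hMN : (1 + X) * (1 - Y) = 1 := by
    have h : (1 + X) * (1 - Y) = 1 + X - Y - X * Y := by noncomm_ring
    rw [h, hXY]; abel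
  refine ⟨?_, Matrix.inv_eq_right_inv hMN⟩
  have hd := congrArg Matrix.det hMN
  rw [Matrix.det_mul, Matrix.det_one] at hd
  exact IsUnit.of_mul_eq_one _ hd
end
end

section
/- (Right fractional factorization via state feedback) Let (A−λE, B, C, D) be a descriptor realization of order n of the p×m matrix G = C·(λ•E − A)⁻¹·B + D over K = ℝ(λ), and let F ∈ ℝ^{m×n} be such that the pencil (A+BF)−λE is regular. Define over K the factors N = (C+DF)·(λ•E − (A+BF))⁻¹·B + D (a p×m matrix) and M = F·(λ•E − (A+BF))⁻¹·B + I_m (an m×m matrix). Then M is invertible over K and G = N·M⁻¹. -/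
open Matrix

noncomputable section
set_option synthInstance.maxHeartbeats 1000000
set_option maxHeartbeats 1000000

lemma aux_rff {n m p : ℕ} (P Pf : Matrix (Fin n) (Fin n) K)
    (Bk : Matrix (Fin n) (Fin m) K) (Fk : Matrix (Fin m) (Fin n) K)
    (Ck : Matrix (Fin p) (Fin n) K) (Dk : Matrix (Fin p) (Fin m) K)
    (hPu : IsUnit P.det) (hPfu : IsUnit Pf.det)
    (hBF : Bk * Fk = P - Pf) :
    IsUnit (Fk * Pf⁻¹ * Bk + 1).det ∧
    Ck * P⁻¹ * Bk + Dk
      = ((Ck + Dk * Fk) * Pf⁻¹ * Bk + Dk) * (Fk * Pf⁻¹ * Bk + 1)⁻¹ := by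
  have h1 : P⁻¹ * P = 1 := Matrix.nonsing_inv_mul P hPu
  have h2 : P * P⁻¹ = 1 := Matrix.mul_nonsing_inv P hPu
  have h3 : Pf⁻¹ * Pf = 1 := Matrix.nonsing_inv_mul Pf hPfu
  have h4 : Pf * Pf⁻¹ = 1 := Matrix.mul_nonsing_inv Pf hPfu
  have hP1 : ∀ X : Matrix (Fin n) (Fin m) K, P⁻¹ * (P * X) = X := fun X => by
    rw [← Matrix.mul_assoc, h1, Matrix.one_mul]
  have hP2 : ∀ X : Matrix (Fin n) (Fin m) K, P * (P⁻¹ * X) = X := fun X => by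
    rw [← Matrix.mul_assoc, h2, Matrix.one_mul]
  have hPf1 : ∀ X : Matrix (Fin n) (Fin m) K, Pf⁻¹ * (Pf * X) = X := fun X => by
    rw [← Matrix.mul_assoc, h3, Matrix.one_mul]
  have hPf2 : ∀ X : Matrix (Fin n) (Fin m) K, Pf * (Pf⁻¹ * X) = X := fun X => by
    rw [← Matrix.mul_assoc, h4, Matrix.one_mul]
  have hBF' : ∀ X : Matrix (Fin n) (Fin m) K,
      Bk * (Fk * X) = P * X - Pf * X := fun X => by
    rw [← Matrix.mul_assoc, hBF, Matrix.sub_mul]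
  have keyB : Bk * (Fk * (P⁻¹ * Bk)) = Bk - Pf * (P⁻¹ * Bk) := by
    rw [hBF', hP2]
  have keyB2 : Bk * (Fk * (Pf⁻¹ * Bk)) = P * (Pf⁻¹ * Bk) - Bk := by
    rw [hBF', hPf2]
  have cross1 : Fk * (Pf⁻¹ * (Bk * (Fk * (P⁻¹ * Bk))))
      = Fk * (Pf⁻¹ * Bk) - Fk * (P⁻¹ * Bk) := by
    rw [keyB, Matrix.mul_sub, hPf1, Matrix.mul_sub]
  have cross2 : Fk * (P⁻¹ * (Bk * (Fk * (Pf⁻¹ * Bk))))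
      = Fk * (Pf⁻¹ * Bk) - Fk * (P⁻¹ * Bk) := by
    rw [keyB2, Matrix.mul_sub, hP1, Matrix.mul_sub]
  have key : Ck * (Pf⁻¹ * Bk)
      = Ck * (P⁻¹ * (Bk * (Fk * (Pf⁻¹ * Bk)))) + Ck * (P⁻¹ * Bk) := by
    rw [keyB2, Matrix.mul_sub, hP1, Matrix.mul_sub]
    abel
  have hMul : (Fk * Pf⁻¹ * Bk + 1) * (1 - Fk * (P⁻¹ * Bk)) = 1 := by
    simp only [Matrix.add_mul, Matrix.mul_add, Matrix.sub_mul, Matrix.mul_sub,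
      Matrix.mul_one, Matrix.one_mul, Matrix.mul_assoc]
    rw [cross1]
    abel
  have hMul' : (1 - Fk * (P⁻¹ * Bk)) * (Fk * Pf⁻¹ * Bk + 1) = 1 := by
    simp only [Matrix.add_mul, Matrix.mul_add, Matrix.sub_mul, Matrix.mul_sub,
      Matrix.mul_one, Matrix.one_mul, Matrix.mul_assoc]
    rw [cross2]
    abel
  have hUnit : IsUnit (Fk * Pf⁻¹ * Bk + 1).det :=
    Matrix.isUnit_det_of_left_inverse hMul'
  have hInv : (Fk * Pf⁻¹ * Bk + 1)⁻¹ = 1 - Fk * (P⁻¹ * Bk) :=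
    Matrix.inv_eq_right_inv hMul
  refine ⟨hUnit, ?_⟩
  have hN : (Ck + Dk * Fk) * Pf⁻¹ * Bk + Dk
      = (Ck * P⁻¹ * Bk + Dk) * (Fk * Pf⁻¹ * Bk + 1) := by
    simp only [Matrix.add_mul, Matrix.mul_add, Matrix.mul_one, Matrix.one_mul,
      Matrix.mul_assoc]
    rw [key]
    abel
  rw [hN, Matrix.mul_assoc (Ck * P⁻¹ * Bk + Dk),
    Matrix.mul_nonsing_inv _ hUnit, Matrix.mul_one]

/-- right fractional factorization via state feedback: with
`N = (C+DF) (λE − (A+BF))⁻¹ B + D` and `M = F (λE − (A+BF))⁻¹ B + I`,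
the factor `M` is invertible and `G = N M⁻¹`. -/
theorem right_fractional_factorization {n p m : ℕ}
    (A E : Matrix (Fin n) (Fin n) ℝ) (B : Matrix (Fin n) (Fin m) ℝ)
    (C : Matrix (Fin p) (Fin n) ℝ) (D : Matrix (Fin p) (Fin m) ℝ)
    (G : Matrix (Fin p) (Fin m) K)
    (hreg : (Lam • toK E - toK A).det ≠ 0)
    (hG : G = toK C * (Lam • toK E - toK A)⁻¹ * toK B + toK D)
    (F : Matrix (Fin m) (Fin n) ℝ)
    (hregF : (Lam • toK E - toK (A + B * F)).det ≠ 0) :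
    IsUnit (toK F * (Lam • toK E - toK (A + B * F))⁻¹ * toK B
        + (1 : Matrix (Fin m) (Fin m) K)).det ∧
    G = (toK (C + D * F) * (Lam • toK E - toK (A + B * F))⁻¹ * toK B + toK D)
        * (toK F * (Lam • toK E - toK (A + B * F))⁻¹ * toK B
            + (1 : Matrix (Fin m) (Fin m) K))⁻¹ := by
  have hBF : toK B * toK F
      = (Lam • toK E - toK A) - (Lam • toK E - toK (A + B * F)) := by
    have : toK (A + B * F) = toK A + toK B * toK F := by
      simp [toK, Matrix.map_add, Matrix.map_mul]
    rw [this]; abel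
  have hCD : toK (C + D * F) = toK C + toK D * toK F := by
    simp [toK, Matrix.map_add, Matrix.map_mul]
  obtain ⟨hu, he⟩ := aux_rff (Lam • toK E - toK A) (Lam • toK E - toK (A + B * F))
    (toK B) (toK F) (toK C) (toK D)
    (isUnit_iff_ne_zero.mpr hreg) (isUnit_iff_ne_zero.mpr hregF) hBF
  rw [hCD]
  exact ⟨hu, by rw [hG]; exact he⟩
end
end

section
/- (Left fractional factorization via output injection) Let (A−λE, B, C, D) be a descriptor realization of order n of the p×m matrix G = C·(λ•E − A)⁻¹·B + D over K = ℝ(λ), and let K₀ ∈ ℝ^{n×p} be such that the pencil (A+K₀C)−λE is regular. Define over K the factors N = C·(λ•E − (A+K₀C))⁻¹·(B+K₀D) + D (a p×m matrix) and M = C·(λ•E − (A+K₀C))⁻¹·K₀ + I_p (a p×p matrix). Then M is invertible over K with M⁻¹ = I_p − C·(λ•E − A)⁻¹·K₀, and G = M⁻¹·N. -/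
open Matrix

noncomputable section
set_option synthInstance.maxHeartbeats 1000000
set_option maxHeartbeats 1000000

/-- left fractional factorization via output injection: with
`N = C (λE − (A+K₀C))⁻¹ (B+K₀D) + D` and `M = C (λE − (A+K₀C))⁻¹ K₀ + I`,
the factor `M` is invertible with `M⁻¹ = I − C (λE − A)⁻¹ K₀`, and `G = M⁻¹ N`. -/
theorem left_fractional_factorization {n p m : ℕ}
    (A E : Matrix (Fin n) (Fin n) ℝ) (B : Matrix (Fin n) (Fin m) ℝ)
    (C : Matrix (Fin p) (Fin n) ℝ) (D : Matrix (Fin p) (Fin m) ℝ)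
    (G : Matrix (Fin p) (Fin m) K)
    (hreg : (Lam • toK E - toK A).det ≠ 0)
    (hG : G = toK C * (Lam • toK E - toK A)⁻¹ * toK B + toK D)
    (K0 : Matrix (Fin n) (Fin p) ℝ)
    (hregK : (Lam • toK E - toK (A + K0 * C)).det ≠ 0) :
    IsUnit (toK C * (Lam • toK E - toK (A + K0 * C))⁻¹ * toK K0
        + (1 : Matrix (Fin p) (Fin p) K)).det ∧
    (toK C * (Lam • toK E - toK (A + K0 * C))⁻¹ * toK K0
        + (1 : Matrix (Fin p) (Fin p) K))⁻¹
      = (1 : Matrix (Fin p) (Fin p) K) - toK C * (Lam • toK E - toK A)⁻¹ * toK K0 ∧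
    G = (toK C * (Lam • toK E - toK (A + K0 * C))⁻¹ * toK K0
          + (1 : Matrix (Fin p) (Fin p) K))⁻¹
        * (toK C * (Lam • toK E - toK (A + K0 * C))⁻¹ * toK (B + K0 * D) + toK D) := by
  have hSu : IsUnit (Lam • toK E - toK A).det := isUnit_iff_ne_zero.mpr hreg
  have hTu : IsUnit (Lam • toK E - toK (A + K0 * C)).det := isUnit_iff_ne_zero.mpr hregK
  set S := Lam • toK E - toK A with hSdef
  set T := Lam • toK E - toK (A + K0 * C) with hTdef
  have hSSi : S * S⁻¹ = 1 := Matrix.mul_nonsing_inv _ hSu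
  have hSiS : S⁻¹ * S = 1 := Matrix.nonsing_inv_mul _ hSu
  have hTTi : T * T⁻¹ = 1 := Matrix.mul_nonsing_inv _ hTu
  have hTiT : T⁻¹ * T = 1 := Matrix.nonsing_inv_mul _ hTu
  have hST : S = T + toK K0 * toK C := by
    rw [hSdef, hTdef]
    have h : toK (A + K0 * C) = toK A + toK K0 * toK C := by
      simp [toK, Matrix.map_add, Matrix.map_mul]
    rw [h]; abel
  have cancelT : ∀ {q : ℕ} (X : Matrix (Fin n) (Fin q) K), T⁻¹ * (T * X) = X := by
    intro q X; rw [← Matrix.mul_assoc, hTiT, Matrix.one_mul]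
  have cancelS : ∀ {q : ℕ} (X : Matrix (Fin n) (Fin q) K), S⁻¹ * (S * X) = X := by
    intro q X; rw [← Matrix.mul_assoc, hSiS, Matrix.one_mul]
  have hk1 : T⁻¹ = S⁻¹ + T⁻¹ * (toK K0 * (toK C * S⁻¹)) := by
    have h1 : T⁻¹ * (S * S⁻¹) = T⁻¹ * ((T + toK K0 * toK C) * S⁻¹) := by rw [← hST]
    rw [hSSi, mul_one] at h1
    conv_lhs => rw [h1]
    simp [Matrix.add_mul, Matrix.mul_add, Matrix.mul_assoc, cancelT]
  have hk2 : T⁻¹ = S⁻¹ + S⁻¹ * (toK K0 * (toK C * T⁻¹)) := by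
    have h1 : S⁻¹ * (S * T⁻¹) = S⁻¹ * ((T + toK K0 * toK C) * T⁻¹) := by rw [← hST]
    rw [cancelS] at h1
    conv_lhs => rw [h1]
    simp only [Matrix.add_mul, Matrix.mul_add, Matrix.mul_assoc]
    rw [hTTi, mul_one]
  have hQ1 : toK C * T⁻¹ * toK K0
      = toK C * S⁻¹ * toK K0 + toK C * T⁻¹ * toK K0 * (toK C * S⁻¹ * toK K0) := by
    conv_lhs => rw [hk1]
    simp [Matrix.add_mul, Matrix.mul_add, Matrix.mul_assoc]
  have hQ2 : toK C * T⁻¹ * toK K0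
      = toK C * S⁻¹ * toK K0 + toK C * S⁻¹ * toK K0 * (toK C * T⁻¹ * toK K0) := by
    conv_lhs => rw [hk2]
    simp [Matrix.add_mul, Matrix.mul_add, Matrix.mul_assoc]
  have e2 : ∀ (X : Matrix (Fin n) (Fin m) K),
      (1 - toK C * S⁻¹ * toK K0) * (toK C * (T⁻¹ * X)) = toK C * (S⁻¹ * X) := by
    intro X
    have hY : toK C * (T⁻¹ * X) = toK C * (S⁻¹ * X)
        + toK C * S⁻¹ * toK K0 * (toK C * (T⁻¹ * X)) := by
      conv_lhs => rw [hk2]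
      simp [Matrix.add_mul, Matrix.mul_add, Matrix.mul_assoc]
    rw [Matrix.sub_mul, Matrix.one_mul, sub_eq_iff_eq_add]
    exact hY
  set Q := toK C * T⁻¹ * toK K0 with hQdef
  set R := toK C * S⁻¹ * toK K0 with hRdef
  have hQR1 : Q - Q * R = R := by rw [sub_eq_iff_eq_add]; exact hQ1
  have hQR2 : Q - R * Q = R := by rw [sub_eq_iff_eq_add]; exact hQ2
  have hMM : (Q + 1) * (1 - R) = 1 := by
    have h : (Q + 1) * (1 - R) = (Q - Q * R) + (1 - R) := by noncomm_ring
    rw [h, hQR1]; abel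
  have hdet : IsUnit (Q + 1).det := by
    have h : (Q + 1).det * (1 - R).det = 1 := by
      rw [← Matrix.det_mul, hMM, Matrix.det_one]
    exact IsUnit.of_mul_eq_one _ h
  have hinv : (Q + 1)⁻¹ = 1 - R := Matrix.inv_eq_right_inv hMM
  refine ⟨hdet, hinv, ?_⟩
  rw [hinv, hG]
  have hBD : toK (B + K0 * D) = toK B + toK K0 * toK D := by
    simp [toK, Matrix.map_add, Matrix.map_mul]
  rw [hBD, Matrix.mul_add, Matrix.mul_assoc (toK C) T⁻¹, e2, Matrix.sub_mul, Matrix.one_mul, hRdef]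
  simp [Matrix.mul_add, Matrix.mul_assoc]
end
end

section
/- (Solution of linear rational matrix equations via the system pencil) Let A, E ∈ ℝ^{n×n} with det(λ•E − A) ≠ 0 in K = ℝ(λ), C ∈ ℝ^{p×n}, B_G ∈ ℝ^{n×m}, D_G ∈ ℝ^{p×m}, B_F ∈ ℝ^{n×q}, D_F ∈ ℝ^{p×q}, and set G = C·(λ•E − A)⁻¹·B_G + D_G and F = C·(λ•E − A)⁻¹·B_F + D_F over K. If W (an n×q matrix over K) and X (an m×q matrix over K) satisfy the linear pencil equations (A − λ•E)·W + B_G·X = B_F and C·W + D_G·X = D_F, then G·X = F. -/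
open Matrix

noncomputable section
set_option synthInstance.maxHeartbeats 1000000
set_option maxHeartbeats 1000000

/-- any solution `Y = [W; X]` of the system-pencil equation
`S_G · Y = [B_F; D_F]` yields a solution `X` of `G · X = F`. -/
theorem pencil_solution_solves_rational_equation {n p m q : ℕ}
    (A E : Matrix (Fin n) (Fin n) ℝ) (C : Matrix (Fin p) (Fin n) ℝ)
    (BG : Matrix (Fin n) (Fin m) ℝ) (DG : Matrix (Fin p) (Fin m) ℝ)
    (BF : Matrix (Fin n) (Fin q) ℝ) (DF : Matrix (Fin p) (Fin q) ℝ)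
    (hreg : (Lam • toK E - toK A).det ≠ 0)
    (G : Matrix (Fin p) (Fin m) K) (F : Matrix (Fin p) (Fin q) K)
    (hG : G = toK C * (Lam • toK E - toK A)⁻¹ * toK BG + toK DG)
    (hF : F = toK C * (Lam • toK E - toK A)⁻¹ * toK BF + toK DF)
    (W : Matrix (Fin n) (Fin q) K) (X : Matrix (Fin m) (Fin q) K)
    (hW : (toK A - Lam • toK E) * W + toK BG * X = toK BF)
    (hX : toK C * W + toK DG * X = toK DF) :
    G * X = F := by
  set M := Lam • toK E - toK A with hM
  have hu : IsUnit M.det := isUnit_iff_ne_zero.mpr hreg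
  have hinv : M⁻¹ * M = 1 := M.nonsing_inv_mul hu
  have h1 : M * W = toK BG * X - toK BF := by
    have h0 := hW
    rw [Matrix.sub_mul] at h0
    rw [hM, Matrix.sub_mul, eq_sub_iff_add_eq, ← h0]
    abel
  have h2 : W = M⁻¹ * (toK BG * X - toK BF) := by
    rw [← h1, ← Matrix.mul_assoc, hinv, Matrix.one_mul]
  subst hG hF
  rw [h2] at hX
  rw [← hX]
  simp only [Matrix.mul_sub, Matrix.mul_add, Matrix.add_mul, Matrix.mul_assoc]
  abel
end
end

section
/- (Compatibility condition) Let A, E ∈ ℝ^{n×n} with det(λ•E − A) ≠ 0 in K = ℝ(λ), C ∈ ℝ^{p×n}, B_G ∈ ℝ^{n×m}, D_G ∈ ℝ^{p×m}, B_F ∈ ℝ^{n×q}, D_F ∈ ℝ^{p×q}, and set G = C·(λ•E − A)⁻¹·B_G + D_G and F = C·(λ•E − A)⁻¹·B_F + D_F over K. Then the following are equivalent: (a) there exists an m×q matrix X over K with G·X = F; (b) the rank over K of G equals the rank over K of the augmented matrix [G, F]; (c) the rank over K of the block matrix [[A − λ•E, B_G],[C, D_G]] equals the rank over K of the block matrix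 [[A − λ•E, B_G, B_F],[C, D_G, D_F]]. -/
open Matrix

noncomputable section
set_option synthInstance.maxHeartbeats 1000000
set_option maxHeartbeats 1000000

section Aux
set_option linter.unusedSectionVars false

variable {R : Type*} [Field R] {l m n o : Type*} [Fintype l] [Fintype m] [Fintype n] [Fintype o]

lemma range_mulVecLin_fromColumns (G : Matrix l m R) (F : Matrix l n R) :
    LinearMap.range (fromCols G F).mulVecLin
      = LinearMap.range G.mulVecLin ⊔ LinearMap.range F.mulVecLin := by
  apply le_antisymm
  · rintro _ ⟨x, rfl⟩
    have hx : x = Sum.elim (x ∘ Sum.inl) (x ∘ Sum.inr) := by ext (i | i) <;> rfl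
    rw [mulVecLin_apply, hx, fromCols_mulVec_sumElim]
    exact Submodule.add_mem_sup ⟨x ∘ Sum.inl, rfl⟩ ⟨x ∘ Sum.inr, rfl⟩
  · refine sup_le ?_ ?_
    · rintro _ ⟨x, rfl⟩
      exact ⟨Sum.elim x 0, by simp [mulVecLin_apply, fromCols_mulVec_sumElim]⟩
    · rintro _ ⟨x, rfl⟩
      exact ⟨Sum.elim 0 x, by simp [mulVecLin_apply, fromCols_mulVec_sumElim]⟩

lemma exists_mul_eq_iff_range_le [DecidableEq n] (G : Matrix l m R) (F : Matrix l n R) :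
    (∃ X : Matrix m n R, G * X = F) ↔
      LinearMap.range F.mulVecLin ≤ LinearMap.range G.mulVecLin := by
  constructor
  · rintro ⟨X, rfl⟩ _ ⟨v, rfl⟩
    exact ⟨X.mulVec v, by simp [mulVecLin_apply, mulVec_mulVec]⟩
  · intro h
    have hcol : ∀ j : n, ∃ x : m → R, G.mulVec x = fun i => F i j := by
      intro j
      obtain ⟨x, hx⟩ := h ⟨Pi.single j 1, rfl⟩
      refine ⟨x, ?_⟩
      rw [mulVecLin_apply] at hx
      rw [hx, mulVecLin_apply]
      ext i
      simp [Matrix.mulVec_single]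
    choose x hx using hcol
    refine ⟨Matrix.of (fun k j => x j k), ?_⟩
    ext i j
    have := congrFun (hx j) i
    simpa [Matrix.mul_apply, Matrix.mulVec, dotProduct] using this

lemma rank_eq_rank_fromColumns_iff (G : Matrix l m R) (F : Matrix l n R) :
    G.rank = (fromCols G F).rank ↔
      LinearMap.range F.mulVecLin ≤ LinearMap.range G.mulVecLin := by
  constructor
  · intro h
    have hle : LinearMap.range G.mulVecLin ≤ LinearMap.range (fromCols G F).mulVecLin := by
      rw [range_mulVecLin_fromColumns]; exact le_sup_left
    have heq := Submodule.eq_of_le_of_finrank_eq hle h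
    rw [range_mulVecLin_fromColumns] at heq
    exact le_trans le_sup_right heq.ge
  · intro h
    have : LinearMap.range (fromCols G F).mulVecLin = LinearMap.range G.mulVecLin := by
      rw [range_mulVecLin_fromColumns, sup_eq_left.mpr h]
    rw [Matrix.rank, Matrix.rank, this]

lemma finrank_prod_submodule {V W : Type*} [AddCommGroup V] [Module R V] [AddCommGroup W]
    [Module R W] [FiniteDimensional R V] [FiniteDimensional R W]
    (p : Submodule R V) (q : Submodule R W) :
    Module.finrank R (p.prod q) = Module.finrank R p + Module.finrank R q := by
  have hinl : Module.finrank R (p.map (LinearMap.inl R V W)) = Module.finrank R p :=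
    (Submodule.equivMapOfInjective _ LinearMap.inl_injective p).finrank_eq.symm
  have hinr : Module.finrank R (q.map (LinearMap.inr R V W)) = Module.finrank R q :=
    (Submodule.equivMapOfInjective _ LinearMap.inr_injective q).finrank_eq.symm
  have hinf : p.map (LinearMap.inl R V W) ⊓ q.map (LinearMap.inr R V W) = ⊥ := by
    apply le_bot_iff.mp
    refine le_trans (inf_le_inf (LinearMap.map_le_range) (LinearMap.map_le_range)) ?_
    rw [(LinearMap.isCompl_range_inl_inr).inf_eq_bot]
  have key := Submodule.finrank_sup_add_finrank_inf_eq
    (p.map (LinearMap.inl R V W)) (q.map (LinearMap.inr R V W))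
  rw [hinf, finrank_bot, add_zero, hinl, hinr] at key
  rw [LinearMap.prod_eq_sup_map, key]

lemma range_prodMap_eq {V₁ V₂ W₁ W₂ : Type*} [AddCommGroup V₁] [Module R V₁]
    [AddCommGroup V₂] [Module R V₂] [AddCommGroup W₁] [Module R W₁] [AddCommGroup W₂]
    [Module R W₂] (f : V₁ →ₗ[R] W₁) (g : V₂ →ₗ[R] W₂) :
    LinearMap.range (f.prodMap g) = (LinearMap.range f).prod (LinearMap.range g) := by
  ext ⟨u, v⟩
  simp only [LinearMap.mem_range, Submodule.mem_prod]
  constructor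
  · rintro ⟨⟨x, y⟩, h⟩
    exact ⟨⟨x, congrArg Prod.fst h⟩, ⟨y, congrArg Prod.snd h⟩⟩
  · rintro ⟨⟨x, hx⟩, ⟨y, hy⟩⟩
    exact ⟨(x, y), Prod.ext hx hy⟩

lemma rank_fromBlocks_diag (A : Matrix m l R) (D : Matrix n o R) :
    (fromBlocks A 0 0 D).rank = A.rank + D.rank := by
  let e₁ := LinearEquiv.sumArrowLequivProdArrow m n R R
  let e₂ := LinearEquiv.sumArrowLequivProdArrow l o R R
  have key : (fromBlocks A 0 0 D).mulVecLin
      = e₁.symm.toLinearMap ∘ₗ (A.mulVecLin.prodMap D.mulVecLin) ∘ₗ e₂.toLinearMap := by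
    apply LinearMap.ext; intro x
    funext i
    cases i <;>
      simp [e₁, e₂, fromBlocks_mulVec, LinearEquiv.sumArrowLequivProdArrow,
        Equiv.sumArrowEquivProdArrow, mulVecLin_apply]
  rw [Matrix.rank, Matrix.rank, Matrix.rank, key, LinearMap.range_comp,
    LinearMap.range_comp_of_range_eq_top _ (LinearEquiv.range e₂),
    LinearEquiv.finrank_map_eq, range_prodMap_eq, finrank_prod_submodule]

lemma rank_submatrix_id_equiv (A : Matrix l m R) (e : n ≃ m) :
    (A.submatrix id e).rank = A.rank := by
  have hsurj : LinearMap.range (LinearMap.funLeft R R (e.symm : m → n)) = ⊤ := by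
    rw [LinearMap.range_eq_top]
    intro t
    exact ⟨t ∘ e, funext fun j => congrArg t (e.apply_symm_apply j)⟩
  have hid : LinearMap.funLeft R R (id : l → l) = LinearMap.id :=
    LinearMap.ext fun g => rfl
  rw [Matrix.rank, Matrix.rank, mulVecLin_submatrix, hid,
    LinearMap.id_comp, LinearMap.range_comp_of_range_eq_top _ hsurj]

lemma rank_schur [DecidableEq l] [DecidableEq m] [DecidableEq o] (P : Matrix m m R)
    (B : Matrix m o R) (C : Matrix l m R)
    (D : Matrix l o R) (hP : IsUnit P.det) :
    (fromBlocks P B C D).rank = Fintype.card m + (D - C * P⁻¹ * B).rank := by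
  set S := D - C * P⁻¹ * B with hS
  have hfact : fromBlocks P B C D
      = (fromBlocks 1 0 (C * P⁻¹) 1 : Matrix (m ⊕ l) (m ⊕ l) R) * ((fromBlocks P 0 0 S : Matrix (m ⊕ l) (m ⊕ o) R) * (fromBlocks 1 (P⁻¹ * B) 0 1 : Matrix (m ⊕ o) (m ⊕ o) R)) := by
    rw [fromBlocks_multiply, fromBlocks_multiply]
    simp only [Matrix.one_mul, Matrix.mul_one, Matrix.zero_mul, Matrix.mul_zero, add_zero,
      zero_add, Matrix.mul_nonsing_inv_cancel_left P B hP,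
      Matrix.nonsing_inv_mul_cancel_right P C hP, hS]
    rw [add_sub_cancel]
  have hL : IsUnit (fromBlocks (1 : Matrix m m R) 0 (C * P⁻¹) (1 : Matrix l l R)).det := by
    rw [det_fromBlocks_zero₁₂]; simp
  have hR : IsUnit (fromBlocks (1 : Matrix m m R) (P⁻¹ * B) 0 (1 : Matrix o o R)).det := by
    rw [det_fromBlocks_zero₂₁]; simp
  rw [hfact, rank_mul_eq_right_of_isUnit_det _ _ hL, rank_mul_eq_left_of_isUnit_det _ _ hR,
    rank_fromBlocks_diag, rank_of_isUnit P ((Matrix.isUnit_iff_isUnit_det P).mpr hP)]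

end Aux

/-- compatibility condition: solvability of `G·X = F` is equivalent to
`rank G = rank [G, F]`, and also to the equality of the ranks of the system pencil and the
augmented system pencil. -/
theorem compatibility_condition {n p m q : ℕ}
    (A E : Matrix (Fin n) (Fin n) ℝ) (C : Matrix (Fin p) (Fin n) ℝ)
    (BG : Matrix (Fin n) (Fin m) ℝ) (DG : Matrix (Fin p) (Fin m) ℝ)
    (BF : Matrix (Fin n) (Fin q) ℝ) (DF : Matrix (Fin p) (Fin q) ℝ)
    (hreg : (Lam • toK E - toK A).det ≠ 0)
    (G : Matrix (Fin p) (Fin m) K) (F : Matrix (Fin p) (Fin q) K)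
    (hG : G = toK C * (Lam • toK E - toK A)⁻¹ * toK BG + toK DG)
    (hF : F = toK C * (Lam • toK E - toK A)⁻¹ * toK BF + toK DF) :
    ((∃ X : Matrix (Fin m) (Fin q) K, G * X = F) ↔
      G.rank = (Matrix.fromCols G F).rank) ∧
    ((∃ X : Matrix (Fin m) (Fin q) K, G * X = F) ↔
      (Matrix.fromBlocks (toK A - Lam • toK E) (toK BG) (toK C) (toK DG)).rank =
        (Matrix.fromCols
          (Matrix.fromBlocks (toK A - Lam • toK E) (toK BG) (toK C) (toK DG))
          (Matrix.fromRows (toK BF) (toK DF))).rank) := by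
  classical
  set M : Matrix (Fin n) (Fin n) K := Lam • toK E - toK A with hM
  have hMdet : IsUnit M.det := isUnit_iff_ne_zero.mpr hreg
  set P : Matrix (Fin n) (Fin n) K := toK A - Lam • toK E with hPdef
  have hPM : P = -M := by rw [hPdef, hM, neg_sub]
  have hPdet : IsUnit P.det := by
    rw [hPM, Matrix.det_neg]
    exact isUnit_iff_ne_zero.mpr
      (mul_ne_zero (pow_ne_zero _ (neg_ne_zero.mpr one_ne_zero)) hreg)
  have hPinv : P⁻¹ = -M⁻¹ := by
    apply Matrix.inv_eq_right_inv
    rw [hPM, Matrix.neg_mul, Matrix.mul_neg, neg_neg, Matrix.mul_nonsing_inv _ hMdet]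
  have hGsub : toK DG - toK C * P⁻¹ * toK BG = G := by
    rw [hPinv, hG, Matrix.mul_neg, Matrix.neg_mul, sub_neg_eq_add, add_comm]
  have hFsub : toK DF - toK C * P⁻¹ * toK BF = F := by
    rw [hPinv, hF, Matrix.mul_neg, Matrix.neg_mul, sub_neg_eq_add, add_comm]
  have key1 : (fromBlocks P (toK BG) (toK C) (toK DG)).rank = n + G.rank := by
    rw [rank_schur _ _ _ _ hPdet, hGsub, Fintype.card_fin]
  have hAug : fromCols (fromBlocks P (toK BG) (toK C) (toK DG)) (fromRows (toK BF) (toK DF))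
      = (fromBlocks P (fromCols (toK BG) (toK BF)) (toK C)
          (fromCols (toK DG) (toK DF))).submatrix
          id (Equiv.sumAssoc (Fin n) (Fin m) (Fin q)) := by
    ext i j
    rcases i with i | i <;> rcases j with (j | j) | j <;> rfl
  have hcols : fromCols (toK DG) (toK DF)
      - toK C * P⁻¹ * fromCols (toK BG) (toK BF) = fromCols G F := by
    rw [Matrix.mul_fromCols]
    ext i (j | j)
    · simpa [Matrix.fromCols] using congrFun (congrFun hGsub i) j
    · simpa [Matrix.fromCols] using congrFun (congrFun hFsub i) j
  have key2 : (fromCols (fromBlocks P (toK BG) (toK C) (toK DG))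
      (fromRows (toK BF) (toK DF))).rank = n + (fromCols G F).rank := by
    rw [hAug, rank_submatrix_id_equiv, rank_schur _ _ _ _ hPdet, hcols, Fintype.card_fin]
  have hiff1 : (∃ X : Matrix (Fin m) (Fin q) K, G * X = F) ↔
      G.rank = (fromCols G F).rank :=
    (exists_mul_eq_iff_range_le G F).trans (rank_eq_rank_fromColumns_iff G F).symm
  refine ⟨hiff1, hiff1.trans ?_⟩
  rw [key1, key2]
  exact (add_right_inj n).symm
end
end

section
/- (Left nullspace of G from the left nullspace of the system pencil) Let (A−λE, B, C, D) be a descriptor realization of order n of the p×m matrix G = C·(λ•E − A)⁻¹·B + D over K = ℝ(λ), and let S = [[A − λ•E, B],[C, D]] be the associated (n+p)×(n+m) system matrix pencil over K. Then the map sending a row vector v ∈ K^{1×(n+p)} to its last p components v·[0; I_p] is a K-linear bijection from the left nullspace {v ∈ K^{1×(n+p)} : v·S = 0} of S onto the left nullspace {w ∈ K^{1×p} : w·G = 0} of G. -/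
open Matrix

noncomputable section
set_option synthInstance.maxHeartbeats 1000000
set_option maxHeartbeats 1000000

/-- the K-linear map sending a row vector `v ∈ K^{1×(n+p)}` to its last `p`
components restricts to a bijection from the left nullspace of the system matrix pencil
`S = [[A − λE, B],[C, D]]` onto the left nullspace of `G = C (λE − A)⁻¹ B + D`. -/
theorem left_nullspace_bijection {n p m : ℕ}
    (A E : Matrix (Fin n) (Fin n) ℝ) (B : Matrix (Fin n) (Fin m) ℝ)
    (C : Matrix (Fin p) (Fin n) ℝ) (D : Matrix (Fin p) (Fin m) ℝ)
    (G : Matrix (Fin p) (Fin m) K)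
    (hreg : (Lam • toK E - toK A).det ≠ 0)
    (hG : G = toK C * (Lam • toK E - toK A)⁻¹ * toK B + toK D) :
    Set.BijOn (⇑(LinearMap.funLeft K K (Sum.inr : Fin p → Fin n ⊕ Fin p)))
      {v : Fin n ⊕ Fin p → K |
        Matrix.vecMul v (Matrix.fromBlocks (toK A - Lam • toK E) (toK B) (toK C) (toK D)) = 0}
      {w : Fin p → K | Matrix.vecMul w G = 0} := by
  set M : Matrix (Fin n) (Fin n) K := Lam • toK E - toK A with hM
  have hU : IsUnit M.det := isUnit_iff_ne_zero.mpr hreg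
  have hMinv : M * M⁻¹ = 1 := Matrix.mul_nonsing_inv _ hU
  have hMinv' : M⁻¹ * M = 1 := Matrix.nonsing_inv_mul _ hU
  -- characterization of the left nullspace of S
  have key : ∀ v : Fin n ⊕ Fin p → K,
      v ∈ {v : Fin n ⊕ Fin p → K |
        Matrix.vecMul v (Matrix.fromBlocks (toK A - Lam • toK E) (toK B) (toK C) (toK D)) = 0} ↔
      ((v ∘ Sum.inl) = Matrix.vecMul (Matrix.vecMul (v ∘ Sum.inr) (toK C)) M⁻¹ ∧
        Matrix.vecMul (v ∘ Sum.inl) (toK B) + Matrix.vecMul (v ∘ Sum.inr) (toK D) = 0) := by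
    intro v
    constructor
    · intro hv
      rw [Set.mem_setOf_eq, Matrix.vecMul_fromBlocks] at hv
      have h1 : Matrix.vecMul (v ∘ Sum.inl) (toK A - Lam • toK E)
          + Matrix.vecMul (v ∘ Sum.inr) (toK C) = 0 := by
        funext i; exact congrFun hv (Sum.inl i)
      have h2 : Matrix.vecMul (v ∘ Sum.inl) (toK B)
          + Matrix.vecMul (v ∘ Sum.inr) (toK D) = 0 := by
        funext i; exact congrFun hv (Sum.inr i)
      refine ⟨?_, h2⟩
      have hneg : (toK A - Lam • toK E) = -M := (neg_sub _ _).symm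
      rw [hneg, Matrix.vecMul_neg] at h1
      have h1' : Matrix.vecMul (v ∘ Sum.inl) M = Matrix.vecMul (v ∘ Sum.inr) (toK C) := by
        have := h1
        rw [neg_add_eq_zero] at this
        exact this
      rw [← h1', Matrix.vecMul_vecMul, hMinv, Matrix.vecMul_one]
    · rintro ⟨h1, h2⟩
      rw [Set.mem_setOf_eq, Matrix.vecMul_fromBlocks]
      have hneg : (toK A - Lam • toK E) = -M := (neg_sub _ _).symm
      have h1' : Matrix.vecMul (v ∘ Sum.inl) M = Matrix.vecMul (v ∘ Sum.inr) (toK C) := by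
        rw [h1, Matrix.vecMul_vecMul, hMinv', Matrix.vecMul_one]
      funext i
      cases i with
      | inl i =>
        have : Matrix.vecMul (v ∘ Sum.inl) (toK A - Lam • toK E)
            + Matrix.vecMul (v ∘ Sum.inr) (toK C) = 0 := by
          rw [hneg, Matrix.vecMul_neg, ← h1', neg_add_cancel]
        simpa using congrFun this i
      | inr i => simpa using congrFun h2 i
  -- w·G = x·B + w·D for v in the nullspace
  have hwG : ∀ v : Fin n ⊕ Fin p → K,
      (v ∘ Sum.inl) = Matrix.vecMul (Matrix.vecMul (v ∘ Sum.inr) (toK C)) M⁻¹ →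
      Matrix.vecMul (v ∘ Sum.inr) G
        = Matrix.vecMul (v ∘ Sum.inl) (toK B) + Matrix.vecMul (v ∘ Sum.inr) (toK D) := by
    intro v h1
    rw [hG, Matrix.vecMul_add, h1]
    simp [Matrix.vecMul_vecMul, Matrix.mul_assoc]
  have hfl : ∀ v : Fin n ⊕ Fin p → K,
      (LinearMap.funLeft K K (Sum.inr : Fin p → Fin n ⊕ Fin p)) v = v ∘ Sum.inr := by
    intro v; rfl
  refine ⟨?_, ?_, ?_⟩
  · intro v hv
    obtain ⟨h1, h2⟩ := (key v).mp hv
    rw [Set.mem_setOf_eq, hfl, hwG v h1, h2]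
  · intro v hv v' hv' heq
    obtain ⟨h1, _⟩ := (key v).mp hv
    obtain ⟨h1', _⟩ := (key v').mp hv'
    rw [hfl, hfl] at heq
    funext i
    cases i with
    | inl i =>
      have : v ∘ Sum.inl = v' ∘ Sum.inl := by rw [h1, h1', heq]
      exact congrFun this i
    | inr i => exact congrFun heq i
  · intro w hw
    set x : Fin n → K := Matrix.vecMul (Matrix.vecMul w (toK C)) M⁻¹ with hx
    refine ⟨Sum.elim x w, ?_, ?_⟩
    · rw [key]
      have hl : (Sum.elim x w ∘ Sum.inl) = x := rfl
      have hr : (Sum.elim x w ∘ Sum.inr) = w := rfl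
      rw [hl, hr]
      refine ⟨rfl, ?_⟩
      have := hwG (Sum.elim x w) (by rw [hl, hr])
      rw [hl, hr] at this
      rw [← this]
      exact hw
    · rfl
end
end
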